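/- arXiv:1407.3939 — 7 statements merged into one kernel-verified Lean document; each statement's English description precedes it below -/
import Mathlib

section
/- Under assumption (H3a), for every x ∈ [0,1)^d: |𝓑∞(x) − (𝓜₁ + 𝓜₂)²| ≤ 2|𝓡₃ (𝓜₁ + 𝓜₂)| + 𝓡₃². -/
/-!
Integrals over a rectangle of products of one-coordinate functions factorize, so averaging the
expansion (H3a) of `s` at `x` over `∏ i [A i, B i)` turns its linear and quadratic terms into an
explicit polynomial in the distances `x i - A i`, `B i - x i`, whose expectation is `𝓜₁ + 𝓜₂`,
and bounds the averaged cubic remainder by `(C₃/4) ∑ ((x i - A i)³ + (B i - x i)³)`, whose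
expectation is `𝓡₃`. Hence `E[s̃(x)] - s(x) = 𝓜₁ + 𝓜₂ + e` with `|e| ≤ 𝓡₃`, while
`𝓑∞(x) = (𝓜₁ + 𝓜₂ + e)²`.
-/

open MeasureTheory ProbabilityTheory

lemma integral_Ico_sub_pow {a b : ℝ} (x : ℝ) (n : ℕ) (h : a ≤ b) :
    ∫ u in Set.Ico a b, (u - x) ^ n = ((b - x) ^ (n + 1) - (a - x) ^ (n + 1)) / (n + 1) := by
  rw [setIntegral_congr_set Ico_ae_eq_Ioc, ← intervalIntegral.integral_of_le h,
    intervalIntegral.integral_comp_sub_right (· ^ n), integral_pow]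

lemma integral_Ico_abs_sub_pow {a b x : ℝ} (n : ℕ) (hax : a ≤ x) (hxb : x ≤ b) :
    ∫ u in Set.Ico a b, |u - x| ^ n = ((x - a) ^ (n + 1) + (b - x) ^ (n + 1)) / (n + 1) := by
  have hI : ∀ c e : ℝ, IntervalIntegrable (fun u : ℝ => |u - x| ^ n) volume c e :=
    fun c e => ((continuous_id.sub continuous_const).abs.pow n).intervalIntegrable c e
  rw [setIntegral_congr_set Ico_ae_eq_Ioc, ← intervalIntegral.integral_of_le (hax.trans hxb),
    ← intervalIntegral.integral_add_adjacent_intervals (hI a x) (hI x b)]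
  have left : ∫ u in a..x, |u - x| ^ n = ∫ u in a..x, (x - u) ^ n :=
    intervalIntegral.integral_congr fun u hu => by
      rw [Set.uIcc_of_le hax] at hu
      rw [abs_sub_comm, abs_of_nonneg (sub_nonneg.2 hu.2)]
  have right : ∫ u in x..b, |u - x| ^ n = ∫ u in x..b, (u - x) ^ n :=
    intervalIntegral.integral_congr fun u hu => by
      rw [Set.uIcc_of_le hxb] at hu
      rw [abs_of_nonneg (sub_nonneg.2 hu.1)]
  rw [left, right, intervalIntegral.integral_comp_sub_left (· ^ n),
    intervalIntegral.integral_comp_sub_right (· ^ n), integral_pow, integral_pow]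
  simp only [sub_self]
  rw [zero_pow (Nat.succ_ne_zero n)]
  ring

/-- The mean over the rectangle `∏ i, [a i, b i)` of the Taylor increment
`t ↦ ∑ i, g i (t i - x i) + ½ ∑ i j, h i j (t i - x i) (t j - x j)`. -/
noncomputable def rectangleTaylorMean {ι : Type*} [Fintype ι] [DecidableEq ι] (g : ι → ℝ)
    (h : ι → ι → ℝ) (x a b : ι → ℝ) : ℝ :=
  (1 / 2) * ∑ i, g i * ((b i - x i) - (x i - a i))
    + ((1 / 6) * ∑ i, h i i * ((x i - a i) ^ 2 + (b i - x i) ^ 2 - (x i - a i) * (b i - x i))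
      + (1 / 8) * ∑ i, ∑ j ∈ Finset.univ \ {i},
          h i j * (((b i - x i) - (x i - a i)) * ((b j - x j) - (x j - a j))))

/-- An upper bound for the mean of `t ↦ C ∑ i, |t i - x i| ^ 3` over the rectangle. -/
noncomputable def rectangleCubicBound {ι : Type*} [Fintype ι] (C : ℝ) (x a b : ι → ℝ) : ℝ :=
  C / 4 * ∑ i, ((x i - a i) ^ 3 + (b i - x i) ^ 3)

section Rectangle

variable {ι : Type*} [Fintype ι] {a b : ι → ℝ}

lemma setIntegral_pi_Ico_prod (f : ι → ℝ → ℝ) :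
    ∫ t in Set.univ.pi (fun i => Set.Ico (a i) (b i)), ∏ i, f i (t i)
      = ∏ i, ∫ u in Set.Ico (a i) (b i), f i u := by
  rw [volume_pi, Measure.restrict_pi_pi, integral_fintype_prod_eq_prod]

lemma setIntegral_pi_Ico_finset_prod [DecidableEq ι] (hab : ∀ i, a i ≤ b i) (s : Finset ι)
    (f : ι → ℝ → ℝ) :
    ∫ t in Set.univ.pi (fun i => Set.Ico (a i) (b i)), ∏ i ∈ s, f i (t i)
      = (∏ i ∈ s, ∫ u in Set.Ico (a i) (b i), f i u) * ∏ i ∈ sᶜ, (b i - a i) := by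
  have hf : ∀ t : ι → ℝ, ∏ i ∈ s, f i (t i) = ∏ i, if i ∈ s then f i (t i) else 1 :=
    fun t => by simp [Finset.prod_ite_mem]
  have hint : ∀ i, ∫ u in Set.Ico (a i) (b i), (if i ∈ s then f i u else 1)
      = if i ∈ s then ∫ u in Set.Ico (a i) (b i), f i u else b i - a i := fun i => by
    by_cases hi : i ∈ s
    · simp only [hi, if_true]
    · simp [hi, hab i]
  simp_rw [hf]
  rw [setIntegral_pi_Ico_prod fun i u => if i ∈ s then f i u else 1]
  simp_rw [hint, Finset.prod_ite]
  simp [Finset.filter_not, Finset.compl_eq_univ_sdiff]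

lemma setIntegral_pi_Ico_apply [DecidableEq ι] (hab : ∀ i, a i ≤ b i) (i : ι) (g : ℝ → ℝ) :
    ∫ t in Set.univ.pi (fun i => Set.Ico (a i) (b i)), g (t i)
      = (∫ u in Set.Ico (a i) (b i), g u) * ∏ j ∈ {i}ᶜ, (b j - a j) := by
  simpa using setIntegral_pi_Ico_finset_prod hab {i} fun _ => g

lemma setIntegral_pi_Ico_apply_mul_apply [DecidableEq ι] (hab : ∀ i, a i ≤ b i) {i k : ι}
    (hik : i ≠ k) (g₁ g₂ : ℝ → ℝ) :
    ∫ t in Set.univ.pi (fun i => Set.Ico (a i) (b i)), g₁ (t i) * g₂ (t k)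
      = (∫ u in Set.Ico (a i) (b i), g₁ u) * (∫ u in Set.Ico (a k) (b k), g₂ u)
        * ∏ j ∈ {i, k}ᶜ, (b j - a j) := by
  simpa [Finset.prod_pair hik, hik, Ne.symm hik] using
    setIntegral_pi_Ico_finset_prod hab {i, k} fun j => if j = i then g₁ else g₂

lemma setIntegral_pi_Ico_sub_apply [DecidableEq ι] (hab : ∀ i, a i ≤ b i) (x : ι → ℝ) (i : ι) :
    ∫ t in Set.univ.pi (fun i => Set.Ico (a i) (b i)), (t i - x i)
      = (∏ j, (b j - a j)) * (((b i - x i) - (x i - a i)) / 2) := by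
  have h1 := integral_Ico_sub_pow (x i) 1 (hab i)
  simp only [pow_one] at h1
  rw [setIntegral_pi_Ico_apply hab i (· - x i), h1, Fintype.prod_eq_mul_prod_compl i]
  ring

lemma setIntegral_pi_Ico_sub_apply_sq [DecidableEq ι] (hab : ∀ i, a i ≤ b i) (x : ι → ℝ)
    (i : ι) :
    ∫ t in Set.univ.pi (fun i => Set.Ico (a i) (b i)), (t i - x i) ^ 2
      = (∏ j, (b j - a j))
        * (((x i - a i) ^ 2 + (b i - x i) ^ 2 - (x i - a i) * (b i - x i)) / 3) := by
  rw [setIntegral_pi_Ico_apply hab i (fun u => (u - x i) ^ 2),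
    integral_Ico_sub_pow (x i) 2 (hab i), Fintype.prod_eq_mul_prod_compl i]
  ring

lemma setIntegral_pi_Ico_sub_apply_mul_sub_apply [DecidableEq ι] (hab : ∀ i, a i ≤ b i)
    (x : ι → ℝ) {i k : ι} (hik : i ≠ k) :
    ∫ t in Set.univ.pi (fun i => Set.Ico (a i) (b i)), (t i - x i) * (t k - x k)
      = (∏ j, (b j - a j))
        * (((b i - x i) - (x i - a i)) * ((b k - x k) - (x k - a k)) / 4) := by
  have h1 := integral_Ico_sub_pow (x i) 1 (hab i)
  have h2 := integral_Ico_sub_pow (x k) 1 (hab k)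
  simp only [pow_one] at h1 h2
  rw [setIntegral_pi_Ico_apply_mul_apply hab hik (· - x i) (· - x k), h1, h2,
    ← Finset.prod_mul_prod_compl {i, k}, Finset.prod_pair hik]
  ring

lemma setIntegral_pi_Ico_abs_sub_apply_pow_three_le [DecidableEq ι] (hab : ∀ i, a i ≤ b i)
    (x : ι → ℝ) {i : ι} (hai : a i ≤ x i) (hbi : x i ≤ b i) :
    ∫ t in Set.univ.pi (fun i => Set.Ico (a i) (b i)), |t i - x i| ^ 3
      ≤ (∏ j, (b j - a j)) * (((x i - a i) ^ 3 + (b i - x i) ^ 3) / 4) := by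
  rw [setIntegral_pi_Ico_apply hab i (fun u => |u - x i| ^ 3),
    integral_Ico_abs_sub_pow 3 hai hbi, Fintype.prod_eq_mul_prod_compl i]
  have hα := sub_nonneg.2 hai
  have hβ := sub_nonneg.2 hbi
  have hrest : 0 ≤ ∏ j ∈ {i}ᶜ, (b j - a j) := Finset.prod_nonneg fun j _ => sub_nonneg.2 (hab j)
  -- `(α + β) (α³ + β³) - (α⁴ + β⁴) = α β (α² + β²)` with `α = x i - a i`, `β = b i - x i`
  have key : ((x i - a i) ^ 4 + (b i - x i) ^ 4) / 4
      ≤ (b i - a i) * (((x i - a i) ^ 3 + (b i - x i) ^ 3) / 4) := by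
    nlinarith [mul_nonneg (mul_nonneg hα hβ) (pow_nonneg hα 2),
      mul_nonneg (mul_nonneg hα hβ) (pow_nonneg hβ 2)]
  push_cast
  nlinarith [mul_le_mul_of_nonneg_right key hrest]

lemma integrableOn_pi_Ico_of_continuous {f : (ι → ℝ) → ℝ} (hf : Continuous f) :
    IntegrableOn f (Set.univ.pi fun i => Set.Ico (a i) (b i)) :=
  (hf.continuousOn.integrableOn_compact (isCompact_univ_pi fun _ => isCompact_Icc)).mono_set
    (Set.pi_mono fun _ _ => Set.Ico_subset_Icc_self)

lemma setIntegral_pi_Ico_sum_mul_sub_apply_mul_sub_apply [DecidableEq ι] (hab : ∀ i, a i ≤ b i)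
    (x : ι → ℝ) (h : ι → ι → ℝ) (i : ι) :
    ∫ t in Set.univ.pi (fun i => Set.Ico (a i) (b i)), ∑ j, h i j * (t i - x i) * (t j - x j)
      = (∏ j, (b j - a j)) * ((1 / 3) * (h i i * ((x i - a i) ^ 2 + (b i - x i) ^ 2
          - (x i - a i) * (b i - x i))) + (1 / 4) * ∑ j ∈ Finset.univ \ {i},
            h i j * (((b i - x i) - (x i - a i)) * ((b j - x j) - (x j - a j)))) := by
  rw [integral_finsetSum _ fun j _ => integrableOn_pi_Ico_of_continuous (by fun_prop),
    Finset.sum_eq_add_sum_sdiff_singleton_of_mem (Finset.mem_univ i)]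
  have hdiag : ∫ t in Set.univ.pi (fun i => Set.Ico (a i) (b i)),
        h i i * (t i - x i) * (t i - x i)
      = (∏ j, (b j - a j)) * ((1 / 3) * (h i i * ((x i - a i) ^ 2 + (b i - x i) ^ 2
          - (x i - a i) * (b i - x i)))) := by
    simp_rw [mul_assoc, ← sq]
    rw [integral_const_mul, setIntegral_pi_Ico_sub_apply_sq hab x]
    ring
  have hoff : ∑ j ∈ Finset.univ \ {i}, ∫ t in Set.univ.pi (fun i => Set.Ico (a i) (b i)),
        h i j * (t i - x i) * (t j - x j)
      = (∏ j, (b j - a j)) * ((1 / 4) * ∑ j ∈ Finset.univ \ {i},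
          h i j * (((b i - x i) - (x i - a i)) * ((b j - x j) - (x j - a j)))) := by
    rw [Finset.mul_sum, Finset.mul_sum]
    refine Finset.sum_congr rfl fun j hj => ?_
    have hij : i ≠ j := Ne.symm (Finset.notMem_singleton.1 (Finset.mem_sdiff.1 hj).2)
    simp_rw [mul_assoc]
    rw [integral_const_mul, setIntegral_pi_Ico_sub_apply_mul_sub_apply hab x hij]
    ring
  rw [hdiag, hoff]
  ring

lemma setIntegral_pi_Ico_taylorPoly [DecidableEq ι] (hab : ∀ i, a i ≤ b i) (x g : ι → ℝ)
    (h : ι → ι → ℝ) :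
    ∫ t in Set.univ.pi (fun i => Set.Ico (a i) (b i)),
        (∑ i, g i * (t i - x i) + (1 / 2) * ∑ i, ∑ j, h i j * (t i - x i) * (t j - x j))
      = (∏ j, (b j - a j)) * rectangleTaylorMean g h x a b := by
  have hmean : rectangleTaylorMean g h x a b = ∑ i, ((1 / 2) * (g i * ((b i - x i) - (x i - a i)))
      + ((1 / 6) * (h i i * ((x i - a i) ^ 2 + (b i - x i) ^ 2 - (x i - a i) * (b i - x i)))
        + (1 / 8) * ∑ j ∈ Finset.univ \ {i},
          h i j * (((b i - x i) - (x i - a i)) * ((b j - x j) - (x j - a j))))) := by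
    simp only [rectangleTaylorMean, Finset.mul_sum, Finset.sum_add_distrib]
  rw [integral_add (integrableOn_pi_Ico_of_continuous (by fun_prop))
      (integrableOn_pi_Ico_of_continuous (by fun_prop)),
    integral_finsetSum _ fun i _ => integrableOn_pi_Ico_of_continuous (by fun_prop),
    integral_const_mul,
    integral_finsetSum _ fun i _ => integrableOn_pi_Ico_of_continuous (by fun_prop),
    Finset.mul_sum, ← Finset.sum_add_distrib, hmean, Finset.mul_sum]
  refine Finset.sum_congr rfl fun i _ => ?_
  rw [integral_const_mul, setIntegral_pi_Ico_sub_apply hab x,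
    setIntegral_pi_Ico_sum_mul_sub_apply_mul_sub_apply hab x h i]
  ring

lemma setIntegral_pi_Ico_abs_sub_pow_three_le (x : ι → ℝ) (hax : ∀ i, a i ≤ x i)
    (hxb : ∀ i, x i ≤ b i) :
    ∫ t in Set.univ.pi (fun i => Set.Ico (a i) (b i)), ∑ i, |t i - x i| ^ 3
      ≤ (∏ j, (b j - a j)) * ((1 / 4) * ∑ i, ((x i - a i) ^ 3 + (b i - x i) ^ 3)) := by
  classical
  have hab i := (hax i).trans (hxb i)
  rw [integral_finsetSum _ fun i _ => integrableOn_pi_Ico_of_continuous (by fun_prop),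
    Finset.mul_sum, Finset.mul_sum]
  refine Finset.sum_le_sum fun i _ => ?_
  refine (setIntegral_pi_Ico_abs_sub_apply_pow_three_le hab x (hax i) (hxb i)).trans_eq ?_
  ring

lemma abs_setIntegral_pi_Ico_le_rectangleCubicBound {x : ι → ℝ} {ρ : (ι → ℝ) → ℝ} {C : ℝ}
    (hax : ∀ i, a i ≤ x i) (hxb : ∀ i, x i ≤ b i) (hC : 0 ≤ C)
    (hρ : ∀ᵐ t ∂volume.restrict (Set.univ.pi fun i => Set.Ico (a i) (b i)),
      ‖ρ t‖ ≤ C * ∑ i, |t i - x i| ^ 3) :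
    |∫ t in Set.univ.pi (fun i => Set.Ico (a i) (b i)), ρ t|
      ≤ (∏ i, (b i - a i)) * rectangleCubicBound C x a b :=
  calc |∫ t in Set.univ.pi (fun i => Set.Ico (a i) (b i)), ρ t|
      ≤ ∫ t in Set.univ.pi (fun i => Set.Ico (a i) (b i)), C * ∑ i, |t i - x i| ^ 3 :=
        norm_integral_le_of_norm_le (integrableOn_pi_Ico_of_continuous (by fun_prop)) hρ
    _ = C * ∫ t in Set.univ.pi (fun i => Set.Ico (a i) (b i)), ∑ i, |t i - x i| ^ 3 :=
        integral_const_mul _ _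
    _ ≤ C * ((∏ i, (b i - a i)) * ((1 / 4) * ∑ i, ((x i - a i) ^ 3 + (b i - x i) ^ 3))) :=
        mul_le_mul_of_nonneg_left (setIntegral_pi_Ico_abs_sub_pow_three_le x hax hxb) hC
    _ = (∏ i, (b i - a i)) * rectangleCubicBound C x a b := by
        rw [rectangleCubicBound]
        ring

lemma abs_setIntegral_pi_Ico_div_sub_le [DecidableEq ι] {x g : ι → ℝ} {h : ι → ι → ℝ}
    {u : (ι → ℝ) → ℝ} {c C : ℝ} (hax : ∀ i, a i ≤ x i) (hxb : ∀ i, x i < b i) (hC : 0 ≤ C)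
    (hu : AEStronglyMeasurable u (volume.restrict (Set.univ.pi fun i => Set.Ico (a i) (b i))))
    (htaylor : ∀ t ∈ Set.univ.pi (fun i => Set.Ico (a i) (b i)),
      |u t - c - ∑ i, g i * (t i - x i) - (1 / 2) * ∑ i, ∑ j, h i j * (t i - x i) * (t j - x j)|
        ≤ C * ∑ i, |t i - x i| ^ 3) :
    |(∫ t in Set.univ.pi (fun i => Set.Ico (a i) (b i)), u t) / ∏ i, (b i - a i) - c
        - rectangleTaylorMean g h x a b| ≤ rectangleCubicBound C x a b := by
  set box := Set.univ.pi fun i => Set.Ico (a i) (b i)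
  set V := ∏ i, (b i - a i)
  have hab i := (hax i).trans (hxb i).le
  have hV : 0 < V := Finset.prod_pos fun i _ => sub_pos.2 ((hax i).trans_lt (hxb i))
  set P : (ι → ℝ) → ℝ := fun t =>
    ∑ i, g i * (t i - x i) + (1 / 2) * ∑ i, ∑ j, h i j * (t i - x i) * (t j - x j)
  have hP : IntegrableOn P box := integrableOn_pi_Ico_of_continuous (by fun_prop)
  have hρ_le : ∀ᵐ t ∂volume.restrict box, ‖u t - c - P t‖ ≤ C * ∑ i, |t i - x i| ^ 3 :=
    (ae_restrict_mem (MeasurableSet.univ_pi fun _ => measurableSet_Ico)).mono fun t ht => by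
      simpa only [P, Real.norm_eq_abs, ← sub_sub] using htaylor t ht
  have hρ : IntegrableOn (fun t => u t - c - P t) box :=
    (integrableOn_pi_Ico_of_continuous (by fun_prop)).mono'
      ((hu.sub aestronglyMeasurable_const).sub hP.aestronglyMeasurable) hρ_le
  have hsplit : ∫ t in box, u t = V * c + V * rectangleTaylorMean g h x a b
      + ∫ t in box, (u t - c - P t) := by
    calc ∫ t in box, u t = ∫ t in box, (c + (P t + (u t - c - P t))) := by
          congr 1 with t
          ring
      _ = V * c + V * rectangleTaylorMean g h x a b + ∫ t in box, (u t - c - P t) := by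
          rw [integral_add (integrableOn_pi_Ico_of_continuous continuous_const)
              (by exact hP.add hρ), integral_add hP hρ, setIntegral_pi_Ico_taylorPoly hab,
            setIntegral_const, measureReal_def, Real.volume_pi_Ico_toReal hab, smul_eq_mul,
            add_assoc]
  rw [hsplit, show ∀ m e : ℝ, (V * c + V * m + e) / V - c - m = e / V from fun m e => by
    field_simp; ring, abs_div, abs_of_pos hV, div_le_iff₀' hV]
  exact abs_setIntegral_pi_Ico_le_rectangleCubicBound hax (fun i => (hxb i).le) hC hρ_le

end Rectangle

lemma measurable_setIntegral_pi_Ico {Ω : Type*} [MeasurableSpace Ω] {ι : Type*} [Fintype ι]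
    {a b : Ω → ι → ℝ} (ha : Measurable a) (hb : Measurable b) {f : (ι → ℝ) → ℝ}
    (hf : Measurable f) :
    Measurable fun ω => ∫ t in Set.univ.pi (fun i => Set.Ico (a ω i) (b ω i)), f t := by
  set S : Set (Ω × (ι → ℝ)) := {p | p.2 ∈ Set.univ.pi fun i => Set.Ico (a p.1 i) (b p.1 i)}
  have hS : MeasurableSet S := by
    have : S = ⋂ i, {p | a p.1 i ≤ p.2 i} ∩ {p | p.2 i < b p.1 i} := by
      ext p
      simp [S]
    rw [this]
    exact .iInter fun i => (measurableSet_le (by fun_prop) (by fun_prop)).inter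
      (measurableSet_lt (by fun_prop) (by fun_prop))
  have hint : ∀ ω, ∫ t in Set.univ.pi (fun i => Set.Ico (a ω i) (b ω i)), f t
      = ∫ t, S.indicator (fun p => f p.2) (ω, t) := fun ω => by
    rw [← integral_indicator (MeasurableSet.univ_pi fun i => measurableSet_Ico)]
    rfl
  simp_rw [hint]
  exact ((hf.comp measurable_snd).indicator hS).stronglyMeasurable.integral_prod_right'.measurable

lemma aestronglyMeasurable_setIntegral_pi_Ico {Ω : Type*} [MeasurableSpace Ω] {μ : Measure Ω}
    {ι : Type*} [Fintype ι] {a b : Ω → ι → ℝ} (ha : Measurable a) (hb : Measurable b)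
    {Q : Set (ι → ℝ)} (hQ : MeasurableSet Q) {f : (ι → ℝ) → ℝ} (hf : ContinuousOn f Q)
    (hbox : ∀ᵐ ω ∂μ, Set.univ.pi (fun i => Set.Ico (a ω i) (b ω i)) ⊆ Q) :
    AEStronglyMeasurable
      (fun ω => ∫ t in Set.univ.pi (fun i => Set.Ico (a ω i) (b ω i)), f t) μ := by
  classical
  -- `f` may be non-measurable off `Q`, so integrate its measurable truncation instead.
  refine (measurable_setIntegral_pi_Ico ha hb
    (hf.measurable_piecewise (g := 0) continuousOn_const hQ)).aestronglyMeasurable.congr ?_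
  filter_upwards [hbox] with ω hω
  exact setIntegral_congr_fun (MeasurableSet.univ_pi fun _ => measurableSet_Ico)
    fun t ht => Set.piecewise_eq_of_mem _ _ _ (hω ht)

section Expectation

variable {Ω : Type*} [MeasurableSpace Ω] {μ : Measure Ω}

lemma abs_integral_sub_sub_le [IsProbabilityMeasure μ] {Y T R : Ω → ℝ} (c : ℝ)
    (hY : AEStronglyMeasurable Y μ) (hT : Integrable T μ) (hR : Integrable R μ)
    (hYT : ∀ᵐ ω ∂μ, |Y ω - c - T ω| ≤ R ω) :
    |∫ ω, Y ω ∂μ - c - ∫ ω, T ω ∂μ| ≤ ∫ ω, R ω ∂μ := by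
  have hρ : Integrable (fun ω => Y ω - c - T ω) μ :=
    hR.mono' ((hY.sub aestronglyMeasurable_const).sub hT.1) hYT
  have hYi : Integrable Y μ :=
    ((hρ.add hT).add (integrable_const c)).congr (ae_of_all _ fun ω => by simp)
  calc |∫ ω, Y ω ∂μ - c - ∫ ω, T ω ∂μ| = ‖∫ ω, (Y ω - c - T ω) ∂μ‖ := by
        rw [integral_sub (by exact hYi.sub (integrable_const c)) hT,
          integral_sub hYi (integrable_const c)]
        simp
    _ ≤ ∫ ω, R ω ∂μ := norm_integral_le_of_norm_le hR hYT

lemma integrable_comp_of_ae_mem_isCompact [IsFiniteMeasure μ] {E : Type*} [TopologicalSpace E]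
    [MeasurableSpace E] [OpensMeasurableSpace E] {X : Ω → E} (hX : AEMeasurable X μ) {K : Set E}
    (hK : IsCompact K) (hXK : ∀ᵐ ω ∂μ, X ω ∈ K) {F : E → ℝ} (hF : Continuous F) :
    Integrable (fun ω => F (X ω)) μ := by
  obtain ⟨C, hC⟩ := hK.exists_bound_of_continuousOn hF.continuousOn
  exact .of_bound (hF.measurable.comp_aemeasurable hX).aestronglyMeasurable C
    (hXK.mono fun ω h => hC _ h)

lemma integral_finsetSum_const_mul {ι : Type*} (s : Finset ι) (c : ι → ℝ) {f : ι → Ω → ℝ}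
    (hf : ∀ i ∈ s, Integrable (f i) μ) :
    ∫ ω, ∑ i ∈ s, c i * f i ω ∂μ = ∑ i ∈ s, c i * ∫ ω, f i ω ∂μ := by
  rw [integral_finsetSum _ fun i hi => (hf i hi).const_mul _]
  simp_rw [integral_const_mul]

variable {ι : Type*} [Fintype ι] [IsFiniteMeasure μ] {a b : Ω → ι → ℝ} {K : Set (ι → ℝ)}

lemma integrable_comp_prodMk_of_ae_mem_isCompact (ha : Measurable a) (hb : Measurable b)
    (hK : IsCompact K) (habK : ∀ᵐ ω ∂μ, a ω ∈ K ∧ b ω ∈ K)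
    {F : (ι → ℝ) × (ι → ℝ) → ℝ} (hF : Continuous F) :
    Integrable (fun ω => F (a ω, b ω)) μ :=
  integrable_comp_of_ae_mem_isCompact (ha.prodMk hb).aemeasurable (hK.prod hK) habK hF

lemma integrable_rectangleTaylorMean [DecidableEq ι] (ha : Measurable a) (hb : Measurable b)
    (hK : IsCompact K) (habK : ∀ᵐ ω ∂μ, a ω ∈ K ∧ b ω ∈ K) (g x : ι → ℝ) (h : ι → ι → ℝ) :
    Integrable (fun ω => rectangleTaylorMean g h x (a ω) (b ω)) μ :=
  integrable_comp_prodMk_of_ae_mem_isCompact ha hb hK habK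
    (F := fun p => rectangleTaylorMean g h x p.1 p.2) (by unfold rectangleTaylorMean; fun_prop)

lemma integrable_rectangleCubicBound (ha : Measurable a) (hb : Measurable b)
    (hK : IsCompact K) (habK : ∀ᵐ ω ∂μ, a ω ∈ K ∧ b ω ∈ K) (C : ℝ) (x : ι → ℝ) :
    Integrable (fun ω => rectangleCubicBound C x (a ω) (b ω)) μ :=
  integrable_comp_prodMk_of_ae_mem_isCompact ha hb hK habK
    (F := fun p => rectangleCubicBound C x p.1 p.2) (by unfold rectangleCubicBound; fun_prop)

lemma integral_rectangleTaylorMean [DecidableEq ι] (ha : Measurable a) (hb : Measurable b)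
    (hK : IsCompact K) (habK : ∀ᵐ ω ∂μ, a ω ∈ K ∧ b ω ∈ K) (g x : ι → ℝ) (h : ι → ι → ℝ) :
    ∫ ω, rectangleTaylorMean g h x (a ω) (b ω) ∂μ
      = (1 / 2) * ∑ i, g i * ((∫ ω, (b ω i - x i) ∂μ) - ∫ ω, (x i - a ω i) ∂μ)
        + ((1 / 6) * ∑ i, h i i * ((∫ ω, (x i - a ω i) ^ 2 ∂μ) + (∫ ω, (b ω i - x i) ^ 2 ∂μ)
            - ∫ ω, (x i - a ω i) * (b ω i - x i) ∂μ)
          + (1 / 8) * ∑ i, ∑ j ∈ Finset.univ \ {i}, h i j *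
              ∫ ω, ((b ω i - x i) - (x i - a ω i)) * ((b ω j - x j) - (x j - a ω j)) ∂μ) := by
  have hI := fun F (hF : Continuous F) =>
    integrable_comp_prodMk_of_ae_mem_isCompact (μ := μ) ha hb hK habK hF
  have hα i : Integrable (fun ω => x i - a ω i) μ := hI (fun p => x i - p.1 i) (by fun_prop)
  have hβ i : Integrable (fun ω => b ω i - x i) μ := hI (fun p => p.2 i - x i) (by fun_prop)
  have hα2 i : Integrable (fun ω => (x i - a ω i) ^ 2) μ :=
    hI (fun p => (x i - p.1 i) ^ 2) (by fun_prop)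
  have hβ2 i : Integrable (fun ω => (b ω i - x i) ^ 2) μ :=
    hI (fun p => (p.2 i - x i) ^ 2) (by fun_prop)
  have hαβ i : Integrable (fun ω => (x i - a ω i) * (b ω i - x i)) μ :=
    hI (fun p => (x i - p.1 i) * (p.2 i - x i)) (by fun_prop)
  have hδδ i j : Integrable
      (fun ω => ((b ω i - x i) - (x i - a ω i)) * ((b ω j - x j) - (x j - a ω j))) μ :=
    hI (fun p => ((p.2 i - x i) - (x i - p.1 i)) * ((p.2 j - x j) - (x j - p.1 j))) (by fun_prop)
  have hS₁ : Integrable (fun ω => ∑ i, g i * ((b ω i - x i) - (x i - a ω i))) μ :=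
    integrable_finsetSum _ fun i _ => ((hβ i).sub (hα i)).const_mul _
  have hS₂ : Integrable (fun ω => ∑ i, h i i *
      ((x i - a ω i) ^ 2 + (b ω i - x i) ^ 2 - (x i - a ω i) * (b ω i - x i))) μ :=
    integrable_finsetSum _ fun i _ => (((hα2 i).add (hβ2 i)).sub (hαβ i)).const_mul _
  have hS₃ : Integrable (fun ω => ∑ i, ∑ j ∈ Finset.univ \ {i}, h i j *
      (((b ω i - x i) - (x i - a ω i)) * ((b ω j - x j) - (x j - a ω j)))) μ :=
    integrable_finsetSum _ fun i _ => integrable_finsetSum _ fun j _ => (hδδ i j).const_mul _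
  unfold rectangleTaylorMean
  rw [integral_add (hS₁.const_mul _) (by exact (hS₂.const_mul _).add (hS₃.const_mul _)),
    integral_add (hS₂.const_mul _) (hS₃.const_mul _), integral_const_mul, integral_const_mul,
    integral_const_mul, integral_finsetSum_const_mul _ _ fun i _ => by exact (hβ i).sub (hα i),
    integral_finsetSum_const_mul _ _ fun i _ => by exact ((hα2 i).add (hβ2 i)).sub (hαβ i),
    integral_finsetSum _ fun i _ => integrable_finsetSum _ fun j _ => (hδδ i j).const_mul _]
  have hα2β2 i : Integrable (fun ω => (x i - a ω i) ^ 2 + (b ω i - x i) ^ 2) μ :=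
    (hα2 i).add (hβ2 i)
  have hquad i := integral_finsetSum_const_mul (Finset.univ \ {i}) (h i) fun j _ => hδδ i j
  simp only [integral_sub, integral_add, hquad, hα, hβ, hα2, hβ2, hαβ, hα2β2]

lemma integral_rectangleCubicBound (ha : Measurable a) (hb : Measurable b)
    (hK : IsCompact K) (habK : ∀ᵐ ω ∂μ, a ω ∈ K ∧ b ω ∈ K) (C : ℝ) (x : ι → ℝ) :
    ∫ ω, rectangleCubicBound C x (a ω) (b ω) ∂μ
      = C / 4 * ∑ i, ((∫ ω, (x i - a ω i) ^ 3 ∂μ) + ∫ ω, (b ω i - x i) ^ 3 ∂μ) := by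
  have hI := fun F (hF : Continuous F) =>
    integrable_comp_prodMk_of_ae_mem_isCompact (μ := μ) ha hb hK habK hF
  have hα i : Integrable (fun ω => (x i - a ω i) ^ 3) μ :=
    hI (fun p => (x i - p.1 i) ^ 3) (by fun_prop)
  have hβ i : Integrable (fun ω => (b ω i - x i) ^ 3) μ :=
    hI (fun p => (p.2 i - x i) ^ 3) (by fun_prop)
  simp only [rectangleCubicBound]
  rw [integral_const_mul,
    integral_finsetSum _ fun i _ => by exact (hα i).add (hβ i)]
  simp_rw [integral_add (hα _) (hβ _)]

end Expectation

lemma abs_sq_sub_sq_le_of_abs_sub_le {y m r : ℝ} (h : |y - m| ≤ r) :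
    |y ^ 2 - m ^ 2| ≤ 2 * |r * m| + r ^ 2 := by
  have hr : 0 ≤ r := (abs_nonneg _).trans h
  calc |y ^ 2 - m ^ 2| = |(y - m) ^ 2 + 2 * m * (y - m)| := by ring_nf
    _ ≤ |y - m| ^ 2 + 2 * |m| * |y - m| := by
        refine (abs_add_le _ _).trans ?_
        rw [abs_pow, abs_mul, abs_mul, abs_two]
    _ ≤ r ^ 2 + 2 * |m| * r := by gcongr
    _ = 2 * |r * m| + r ^ 2 := by rw [abs_mul, abs_of_nonneg hr]; ring

theorem rectangle_bias_bounds_H3a_general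
    {Ω : Type*} [MeasureSpace Ω] [IsProbabilityMeasure (ℙ : Measure Ω)]
    (d : ℕ)
    (x : Fin d → ℝ) (hx : ∀ i, x i ∈ Set.Ico (0 : ℝ) 1)
    (A B : Fin d → Ω → ℝ)
    (hmeasA : ∀ i, Measurable (A i)) (hmeasB : ∀ i, Measurable (B i))
    (hAB : ∀ᵐ ω : Ω, ∀ i, 0 ≤ A i ω ∧ A i ω ≤ x i ∧ x i < B i ω ∧ B i ω ≤ 1)
    (s : (Fin d → ℝ) → ℝ) (grad : (Fin d → ℝ) → Fin d → ℝ)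
    (hess : (Fin d → ℝ) → Fin d → Fin d → ℝ) (C₃ : ℝ) (hC₃ : 0 < C₃)
    (hdiff : ∀ y ∈ Set.univ.pi fun _ : Fin d => Set.Ico (0 : ℝ) 1,
        HasFDerivWithinAt s
          (∑ i : Fin d, grad y i • (ContinuousLinearMap.proj i : (Fin d → ℝ) →L[ℝ] ℝ))
          (Set.univ.pi fun _ : Fin d => Set.Ico (0 : ℝ) 1) y)
    (hH3a : ∀ t ∈ Set.univ.pi fun _ : Fin d => Set.Ico (0 : ℝ) 1,
        ∀ y ∈ Set.univ.pi fun _ : Fin d => Set.Ico (0 : ℝ) 1,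
        |s t - s y - (∑ i : Fin d, grad y i * (t i - y i))
            - (1 / 2) * ∑ i : Fin d, ∑ j : Fin d, hess y i j * (t i - y i) * (t j - y j)|
          ≤ C₃ * ∑ i : Fin d, |t i - y i| ^ 3)
    (stilde : Ω → ℝ)
    (hstilde : ∀ ω : Ω, stilde ω =
        (∫ t in Set.univ.pi fun i => Set.Ico (A i ω) (B i ω), s t)
          / ∏ i : Fin d, (B i ω - A i ω))
    (M₁ M₂ R₃ Binf : ℝ)
    (hM₁ : M₁ = (1 / 2) * ∑ i : Fin d,
        grad x i * ((∫ ω : Ω, (B i ω - x i)) - ∫ ω : Ω, (x i - A i ω)))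
    (hM₂ : M₂ = (1 / 6) * (∑ i : Fin d, hess x i i *
            ((∫ ω : Ω, (x i - A i ω) ^ 2) + (∫ ω : Ω, (B i ω - x i) ^ 2)
              - ∫ ω : Ω, (x i - A i ω) * (B i ω - x i)))
        + (1 / 8) * ∑ i : Fin d, ∑ j ∈ Finset.univ \ {i},
            hess x i j *
              ∫ ω : Ω, ((B i ω - x i) - (x i - A i ω)) * ((B j ω - x j) - (x j - A j ω)))
    (hR₃ : R₃ = (C₃ / 4) * ∑ i : Fin d,
        ((∫ ω : Ω, (x i - A i ω) ^ 3) + ∫ ω : Ω, (B i ω - x i) ^ 3))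
    (hBinf : Binf = (s x - ∫ ω : Ω, stilde ω) ^ 2) :
    |Binf - (M₁ + M₂) ^ 2| ≤ 2 * |R₃ * (M₁ + M₂)| + R₃ ^ 2 := by
  set Q := Set.univ.pi fun _ : Fin d => Set.Ico (0 : ℝ) 1
  set a : Ω → Fin d → ℝ := fun ω i => A i ω
  set b : Ω → Fin d → ℝ := fun ω i => B i ω
  have ha : Measurable a := measurable_pi_lambda _ hmeasA
  have hb : Measurable b := measurable_pi_lambda _ hmeasB
  have hs : ContinuousOn s Q := fun y hy => (hdiff y hy).continuousWithinAt
  have hboxQ : ∀ᵐ ω, Set.univ.pi (fun i => Set.Ico (a ω i) (b ω i)) ⊆ Q :=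
    hAB.mono fun ω h => Set.pi_mono fun i _ => Set.Ico_subset_Ico (h i).1 (h i).2.2.2
  have hK : ∀ᵐ ω, a ω ∈ Set.Icc 0 1 ∧ b ω ∈ Set.Icc 0 1 := hAB.mono fun ω h =>
    ⟨⟨fun i => (h i).1, fun i => (h i).2.1.trans (hx i).2.le⟩,
      ⟨fun i => (hx i).1.trans (h i).2.2.1.le, fun i => (h i).2.2.2⟩⟩
  have hY : AEStronglyMeasurable stilde ℙ := by
    rw [show stilde = _ from funext hstilde]
    have hV : Measurable fun ω => ∏ i, (b ω i - a ω i) := by fun_prop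
    exact ((aestronglyMeasurable_setIntegral_pi_Ico ha hb (MeasurableSet.univ_pi fun _ =>
      measurableSet_Ico) hs hboxQ).aemeasurable.div hV.aemeasurable).aestronglyMeasurable
  have hYT : ∀ᵐ ω, |stilde ω - s x - rectangleTaylorMean (grad x) (hess x) x (a ω) (b ω)|
      ≤ rectangleCubicBound C₃ x (a ω) (b ω) := by
    filter_upwards [hAB, hboxQ] with ω hω hωQ
    rw [hstilde]
    exact abs_setIntegral_pi_Ico_div_sub_le (fun i => (hω i).2.1) (fun i => (hω i).2.2.1) hC₃.le
      ((hs.mono hωQ).aestronglyMeasurable (MeasurableSet.univ_pi fun _ => measurableSet_Ico))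
      fun t ht => hH3a t (hωQ ht) x (fun i _ => hx i)
  have hmean := abs_integral_sub_sub_le (s x) hY
    (integrable_rectangleTaylorMean ha hb isCompact_Icc hK _ _ _)
    (integrable_rectangleCubicBound ha hb isCompact_Icc hK _ _) hYT
  rw [integral_rectangleTaylorMean ha hb isCompact_Icc hK,
    integral_rectangleCubicBound ha hb isCompact_Icc hK] at hmean
  rw [hBinf, ← neg_sub (∫ ω, stilde ω) (s x), neg_sq, hM₁, hM₂, hR₃]
  exact abs_sq_sub_sq_le_of_abs_sub_le hmean

/-- **Tight approximation of the infinite-forest bias under (H3a) (Proposition 4, third part).**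
Random rectangle setup: `A i, B i` are random variables with `0 ≤ A i ≤ x i < B i ≤ 1` a.s.;
`s̃(x)` is the average of `s` over the random rectangle `∏ i [A i, B i)`;
`𝓑∞(x) = (s x − E[s̃(x)])²`.  Under (H3a) (with gradient `grad`, Hessian `hess`, constant
`C₃`), with `𝓜₁`, `𝓜₂`, `𝓡₃` as in the paper:
`|𝓑∞(x) − (𝓜₁ + 𝓜₂)²| ≤ 2|𝓡₃(𝓜₁ + 𝓜₂)| + 𝓡₃²`. -/
theorem rectangle_bias_bounds_H3a
    {Ω : Type*} [MeasureSpace Ω] [IsProbabilityMeasure (ℙ : Measure Ω)]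
    (d : ℕ) (hd : 1 ≤ d)
    (x : Fin d → ℝ) (hx : ∀ i, x i ∈ Set.Ico (0 : ℝ) 1)
    (A B : Fin d → Ω → ℝ)
    (hmeasA : ∀ i, Measurable (A i)) (hmeasB : ∀ i, Measurable (B i))
    (hAB : ∀ᵐ ω : Ω, ∀ i, 0 ≤ A i ω ∧ A i ω ≤ x i ∧ x i < B i ω ∧ B i ω ≤ 1)
    (s : (Fin d → ℝ) → ℝ) (grad : (Fin d → ℝ) → Fin d → ℝ)
    (hess : (Fin d → ℝ) → Fin d → Fin d → ℝ) (C₃ : ℝ) (hC₃ : 0 < C₃)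
    (hdiff : ∀ y ∈ Set.univ.pi fun _ : Fin d => Set.Ico (0 : ℝ) 1,
        HasFDerivWithinAt s
          (∑ i : Fin d, grad y i • (ContinuousLinearMap.proj i : (Fin d → ℝ) →L[ℝ] ℝ))
          (Set.univ.pi fun _ : Fin d => Set.Ico (0 : ℝ) 1) y)
    (hdiff2 : ∀ j : Fin d, ∀ y ∈ Set.univ.pi fun _ : Fin d => Set.Ico (0 : ℝ) 1,
        HasFDerivWithinAt (fun z => grad z j)
          (∑ i : Fin d, hess y j i • (ContinuousLinearMap.proj i : (Fin d → ℝ) →L[ℝ] ℝ))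
          (Set.univ.pi fun _ : Fin d => Set.Ico (0 : ℝ) 1) y)
    (hH3a : ∀ t ∈ Set.univ.pi fun _ : Fin d => Set.Ico (0 : ℝ) 1,
        ∀ y ∈ Set.univ.pi fun _ : Fin d => Set.Ico (0 : ℝ) 1,
        |s t - s y - (∑ i : Fin d, grad y i * (t i - y i))
            - (1 / 2) * ∑ i : Fin d, ∑ j : Fin d, hess y i j * (t i - y i) * (t j - y j)|
          ≤ C₃ * ∑ i : Fin d, |t i - y i| ^ 3)
    (stilde : Ω → ℝ)
    (hstilde : ∀ ω : Ω, stilde ω =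
        (∫ t in Set.univ.pi fun i => Set.Ico (A i ω) (B i ω), s t)
          / ∏ i : Fin d, (B i ω - A i ω))
    (M₁ M₂ R₃ Binf : ℝ)
    (hM₁ : M₁ = (1 / 2) * ∑ i : Fin d,
        grad x i * ((∫ ω : Ω, (B i ω - x i)) - ∫ ω : Ω, (x i - A i ω)))
    (hM₂ : M₂ = (1 / 6) * (∑ i : Fin d, hess x i i *
            ((∫ ω : Ω, (x i - A i ω) ^ 2) + (∫ ω : Ω, (B i ω - x i) ^ 2)
              - ∫ ω : Ω, (x i - A i ω) * (B i ω - x i)))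
        + (1 / 8) * ∑ i : Fin d, ∑ j ∈ Finset.univ \ {i},
            hess x i j *
              ∫ ω : Ω, ((B i ω - x i) - (x i - A i ω)) * ((B j ω - x j) - (x j - A j ω)))
    (hR₃ : R₃ = (C₃ / 4) * ∑ i : Fin d,
        ((∫ ω : Ω, (x i - A i ω) ^ 3) + ∫ ω : Ω, (B i ω - x i) ^ 3))
    (hBinf : Binf = (s x - ∫ ω : Ω, stilde ω) ^ 2) :
    |Binf - (M₁ + M₂) ^ 2| ≤ 2 * |R₃ * (M₁ + M₂)| + R₃ ^ 2 :=
  rectangle_bias_bounds_H3a_general d x hx A B hmeasA hmeasB hAB s grad hess C₃ hC₃ hdiff hH3a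
    stilde hstilde M₁ M₂ R₃ Binf hM₁ hM₂ hR₃ hBinf
end

section
/- Let k ≥ 2 and s : [0,1) → ℝ be integrable. For every x ∈ [1/k, 1 − 1/k], the expected infinite forest of the toy model satisfies E_T[s̃_U(x)] = ∫₀¹ s(t) h(t − x) dt, where h(u) = k(1 − ku) if 0 ≤ u ≤ 1/k, h(u) = k(1 + ku) if −1/k ≤ u ≤ 0, and h(u) = 0 if |u| ≥ 1/k. -/
open MeasureTheory

/-- Left endpoint of the cell containing `x` in the toy-model partition
`{[0,(1−T)/k), [(1−T)/k,(2−T)/k), …, [(k−T)/k,1)}` of `[0,1)`: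
the grid cell of `x` is `[(j−T)/k, (j+1−T)/k)` with `j = ⌊kx+T⌋`, clipped to `[0,1]`. -/
noncomputable def toyA (k : ℕ) (T x : ℝ) : ℝ :=
  max 0 (((⌊(k : ℝ) * x + T⌋ : ℝ) - T) / k)

/-- Right endpoint of the cell containing `x` in the toy-model partition. -/
noncomputable def toyB (k : ℕ) (T x : ℝ) : ℝ :=
  min 1 (((⌊(k : ℝ) * x + T⌋ : ℝ) + 1 - T) / k)

/-- The "hat kernel" `h` of the toy model. -/
noncomputable def toyKernel (k : ℕ) (u : ℝ) : ℝ :=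
  if 0 ≤ u ∧ u ≤ (k : ℝ)⁻¹ then (k : ℝ) * (1 - k * u)
  else if -(k : ℝ)⁻¹ ≤ u ∧ u ≤ 0 then (k : ℝ) * (1 + k * u)
  else 0

/-!
For `x ∈ [1/k, 1 - 1/k]` the cell of `x` is never clipped by `[0, 1)`, so it has length `1/k` and
`s̃_U(x) = k ∫₀¹ s(t) 1[t, x in the same cell] dt`. After Fubini, the `T`-average of that indicator
is the probability that a uniformly shifted unit grid does not separate `kt` and `kx`; by
`1`-periodicity in the shift it is `max 0 (1 - k|t - x|)`, and `k` times this is the hat kernel.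
-/

open Set

lemma periodic_floor_eq_floor_add (d : ℝ) :
    Function.Periodic (fun u : ℝ => if ⌊u⌋ = ⌊u + d⌋ then (1 : ℝ) else 0) 1 := by
  intro u
  simp only [add_right_comm u 1 d, Int.floor_add_one, add_left_inj]

lemma integral_floor_eq_floor_add {d : ℝ} (hd : 0 ≤ d) :
    ∫ u in (0 : ℝ)..1, (if ⌊u⌋ = ⌊u + d⌋ then (1 : ℝ) else 0) = max 0 (1 - d) := by
  have hindicator : ∀ u ∈ Ico (0 : ℝ) 1,
      (if ⌊u⌋ = ⌊u + d⌋ then (1 : ℝ) else 0) = (Iio (1 - d)).indicator 1 u := by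
    rintro u ⟨h0, h1⟩
    simp only [Int.floor_eq_zero_iff.mpr ⟨h0, h1⟩, indicator_apply, mem_Iio, Pi.one_apply,
      eq_comm (a := (0 : ℤ)), Int.floor_eq_zero_iff, mem_Ico]
    congr 1
    exact propext ⟨fun h => by linarith [h.2], fun h => ⟨by linarith, by linarith⟩⟩
  rw [intervalIntegral.integral_of_le zero_le_one, ← integral_Ico_eq_integral_Ioc,
    setIntegral_congr_fun measurableSet_Ico hindicator, integral_indicator_one measurableSet_Iio,
    measureReal_restrict_apply measurableSet_Iio, inter_comm, Ico_inter_Iio,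
    min_eq_right (by linarith), Real.volume_real_Ico, max_comm, sub_zero]

lemma integral_Ico_floor_add_eq_floor_add (a b : ℝ) :
    ∫ T in Ico (0 : ℝ) 1, (if ⌊a + T⌋ = ⌊b + T⌋ then (1 : ℝ) else 0) = max 0 (1 - |b - a|) := by
  wlog hab : a ≤ b generalizing a b
  · simpa only [eq_comm, abs_sub_comm] using this b a (le_of_not_ge hab)
  set g : ℝ → ℝ := fun u => if ⌊u⌋ = ⌊u + (b - a)⌋ then 1 else 0
  have hshift : ∀ T, g (a + T) = if ⌊a + T⌋ = ⌊b + T⌋ then 1 else 0 := fun T => by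
    simp only [g, show a + T + (b - a) = b + T by ring]
  calc ∫ T in Ico (0 : ℝ) 1, (if ⌊a + T⌋ = ⌊b + T⌋ then (1 : ℝ) else 0)
      = ∫ T in (0 : ℝ)..1, g (a + T) := by
        simp only [hshift, intervalIntegral.integral_of_le zero_le_one,
          integral_Ico_eq_integral_Ioc]
    _ = ∫ u in a..a + 1, g u := by rw [intervalIntegral.integral_comp_add_left, add_zero]
    _ = ∫ u in (0 : ℝ)..0 + 1, g u :=
        (periodic_floor_eq_floor_add (b - a)).intervalIntegral_add_eq a 0
    _ = max 0 (1 - |b - a|) := by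
        rw [zero_add, integral_floor_eq_floor_add (sub_nonneg.mpr hab),
          abs_of_nonneg (sub_nonneg.mpr hab)]

lemma mem_Ico_div_iff_floor_eq {k : ℝ} (hk : 0 < k) (j : ℤ) (T t : ℝ) :
    t ∈ Ico ((j - T) / k) ((j + 1 - T) / k) ↔ ⌊k * t + T⌋ = j := by
  rw [mem_Ico, Int.floor_eq_iff, div_le_iff₀ hk, lt_div_iff₀ hk]
  constructor <;> rintro ⟨h₁, h₂⟩ <;> constructor <;> linarith

/-- `1` if `t` and `x` lie in the same cell of the grid `(ℤ - T) / k`, else `0`. -/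
noncomputable def sameCell (k T x t : ℝ) : ℝ :=
  if ⌊k * t + T⌋ = ⌊k * x + T⌋ then 1 else 0

lemma measurable_sameCell (k x : ℝ) : Measurable fun p : ℝ × ℝ => sameCell k p.1 x p.2 := by
  refine Measurable.ite (measurableSet_eq_fun ?_ ?_) measurable_const measurable_const <;>
    exact Int.measurable_floor.comp (by fun_prop)

lemma norm_sameCell_le (k T x t : ℝ) : ‖sameCell k T x t‖ ≤ 1 := by
  unfold sameCell; split_ifs <;> simp

section Cell

variable {k : ℕ} {T x : ℝ}

lemma toy_cell_index_bounds (hk : 0 < k) (hx : x ∈ Icc ((k : ℝ)⁻¹) (1 - (k : ℝ)⁻¹))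
    (hT : T ∈ Ico (0 : ℝ) 1) :
    T ≤ ⌊(k : ℝ) * x + T⌋ ∧ (⌊(k : ℝ) * x + T⌋ : ℝ) + 1 - T ≤ k := by
  have hk' : (0 : ℝ) < k := Nat.cast_pos.mpr hk
  have hlow : 1 ≤ (k : ℝ) * x := (inv_le_iff_one_le_mul₀' hk').mp hx.1
  have hupp : (k : ℝ) * x ≤ k - 1 := by
    have := mul_le_mul_of_nonneg_left hx.2 hk'.le
    rwa [mul_sub, mul_one, mul_inv_cancel₀ hk'.ne'] at this
  have hfloor_ge : (1 : ℝ) ≤ ⌊(k : ℝ) * x + T⌋ := by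
    exact_mod_cast Int.le_floor.mpr (by push_cast; linarith [hT.1])
  constructor
  · linarith [hT.2]
  · linarith [Int.floor_le ((k : ℝ) * x + T)]

lemma toyA_eq_of_mem (hk : 0 < k) (hx : x ∈ Icc ((k : ℝ)⁻¹) (1 - (k : ℝ)⁻¹))
    (hT : T ∈ Ico (0 : ℝ) 1) :
    toyA k T x = (⌊(k : ℝ) * x + T⌋ - T) / k :=
  max_eq_right (div_nonneg (sub_nonneg.mpr (toy_cell_index_bounds hk hx hT).1) k.cast_nonneg)

lemma toyB_eq_of_mem (hk : 0 < k) (hx : x ∈ Icc ((k : ℝ)⁻¹) (1 - (k : ℝ)⁻¹))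
    (hT : T ∈ Ico (0 : ℝ) 1) :
    toyB k T x = (⌊(k : ℝ) * x + T⌋ + 1 - T) / k :=
  min_eq_right ((div_le_one (Nat.cast_pos.mpr hk)).mpr (toy_cell_index_bounds hk hx hT).2)

lemma toy_cell_average_eq_integral_sameCell (s : ℝ → ℝ) (hk : 0 < k)
    (hx : x ∈ Icc ((k : ℝ)⁻¹) (1 - (k : ℝ)⁻¹)) (hT : T ∈ Ico (0 : ℝ) 1) :
    (∫ t in Ico (toyA k T x) (toyB k T x), s t) / (toyB k T x - toyA k T x)
      = ∫ t in Ico (0 : ℝ) 1, k * (s t * sameCell k T x t) := by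
  have hk' : (0 : ℝ) < k := Nat.cast_pos.mpr hk
  set j := ⌊(k : ℝ) * x + T⌋
  have hcell : Ico (((j : ℝ) - T) / k) ((j + 1 - T) / k) = {t | ⌊(k : ℝ) * t + T⌋ = j} :=
    ext fun t => mem_Ico_div_iff_floor_eq hk' j T t
  have hsub : Ico (((j : ℝ) - T) / k) ((j + 1 - T) / k) ⊆ Ico 0 1 := by
    rw [← toyA_eq_of_mem hk hx hT, ← toyB_eq_of_mem hk hx hT]
    exact Ico_subset_Ico (le_max_left _ _) (min_le_left _ _)
  have hindicator : ∀ t, s t * sameCell k T x t = {t | ⌊(k : ℝ) * t + T⌋ = j}.indicator s t := by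
    intro t
    simp only [sameCell, indicator_apply, mem_ofPred_eq, j]
    split_ifs <;> simp
  simp only [hindicator, integral_const_mul]
  rw [toyA_eq_of_mem hk hx hT, toyB_eq_of_mem hk hx hT, ← hcell,
    setIntegral_indicator measurableSet_Ico, inter_eq_right.mpr hsub, div_eq_mul_inv, ← sub_div,
    show (j : ℝ) + 1 - T - (j - T) = 1 by ring, one_div, inv_inv, mul_comm]

end Cell

lemma toyKernel_eq_mul_max (k : ℕ) (u : ℝ) :
    toyKernel k u = k * max 0 (1 - |k * u|) := by
  rcases (Nat.cast_nonneg (α := ℝ) k).eq_or_lt with hk | hk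
  · simp [toyKernel, ← hk]
  have hscale : ∀ a b : ℝ, (a ≤ u ∧ u ≤ b) ↔ (k * a ≤ k * u ∧ k * u ≤ k * b) := by
    simp [mul_le_mul_iff_right₀ hk]
  simp only [toyKernel, hscale, mul_zero, mul_neg, mul_inv_cancel₀ hk.ne']
  generalize (k : ℝ) * u = v
  grind

/-- **The expected infinite forest of the toy model is a kernel smoother.**
For `k ≥ 2`, `s` integrable on `[0,1)` and `x ∈ [1/k, 1−1/k]`,
`E_T[s̃_U(x)] = ∫₀¹ s(t) h(t−x) dt`, where `T` is uniform on `[0,1)` and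
`s̃_U(x)` is the average of `s` over the toy-model cell containing `x`. -/
theorem toy_model_kernel
    (k : ℕ) (hk : 2 ≤ k) (s : ℝ → ℝ)
    (hs : IntegrableOn s (Set.Ico (0 : ℝ) 1))
    (x : ℝ) (hx : x ∈ Set.Icc ((k : ℝ)⁻¹) (1 - (k : ℝ)⁻¹)) :
    (∫ T in Set.Ico (0 : ℝ) 1,
        (∫ t in Set.Ico (toyA k T x) (toyB k T x), s t) / (toyB k T x - toyA k T x))
      = ∫ t in Set.Ico (0 : ℝ) 1, s t * toyKernel k (t - x) := by
  have hintegrable : Integrable (Function.uncurry fun T t => (k : ℝ) * (s t * sameCell k T x t))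
      ((volume.restrict (Ico 0 1)).prod (volume.restrict (Ico 0 1))) :=
    ((hs.comp_snd _).mul_bdd (measurable_sameCell k x).aestronglyMeasurable
      (ae_of_all _ fun p => norm_sameCell_le k p.1 x p.2)).const_mul _
  calc _ = ∫ T in Ico (0 : ℝ) 1, ∫ t in Ico (0 : ℝ) 1, (k : ℝ) * (s t * sameCell k T x t) :=
        setIntegral_congr_fun measurableSet_Ico fun _ hT =>
          toy_cell_average_eq_integral_sameCell s (by omega) hx hT
    _ = ∫ t in Ico (0 : ℝ) 1, ∫ T in Ico (0 : ℝ) 1, (k : ℝ) * (s t * sameCell k T x t) :=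
        integral_integral_swap hintegrable
    _ = _ := by
        refine integral_congr_ae (ae_of_all _ fun t => ?_)
        simp only [integral_const_mul, sameCell, integral_Ico_floor_add_eq_floor_add,
          toyKernel_eq_mul_max]
        rw [abs_sub_comm, mul_sub]
        ring
end

section
/- Let k ≥ 2, x ∈ [1/k, 1 − 1/k], and in the toy model set α = x − A_{U,x} and β = B_{U,x} − x. Then E[αβ] = 1/(6k²), E[α − β] = 0, and for every integer κ ≥ 1, E[α^κ + β^κ] = 2/((κ+1) k^κ). -/
open MeasureTheory

/-!
Away from the border the cell of `x` is never clipped, so `α = {kx + T}/k` and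
`β = (1 - {kx + T})/k`. As `T` runs over `[0,1)`, the fractional part `{kx + T}` runs over
`[0,1)` exactly once (up to a rotation), so every moment of `(α, β)` is an integral
`∫₀¹ F(u/k, (1-u)/k) du` that no longer depends on `x`.
-/

open Set intervalIntegral

section FractIntegral

variable {E : Type*} [NormedAddCommGroup E] [NormedSpace ℝ E]

lemma setIntegral_Ico_zero_one_eq_intervalIntegral (f : ℝ → E) :
    ∫ t in Ico (0 : ℝ) 1, f t = ∫ t in (0 : ℝ)..1, f t := by
  rw [integral_Ico_eq_integral_Ioo, integral_of_le zero_le_one, integral_Ioc_eq_integral_Ioo]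

lemma intervalIntegral_comp_fract_add (f : ℝ → E) (c : ℝ) :
    ∫ t in (0 : ℝ)..1, f (Int.fract (c + t)) = ∫ u in (0 : ℝ)..1, f u := by
  calc ∫ t in (0 : ℝ)..1, f (Int.fract (c + t))
      = ∫ u in c..c + 1, f (Int.fract u) := by
        simpa using integral_comp_add_left (fun u => f (Int.fract u)) c (a := 0) (b := 1)
    _ = ∫ u in (0 : ℝ)..0 + 1, f (Int.fract u) :=
        ((Int.fract_periodic ℝ).comp f).intervalIntegral_add_eq c 0
    _ = ∫ u in (0 : ℝ)..1, f u := by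
        rw [zero_add, ← setIntegral_Ico_zero_one_eq_intervalIntegral,
          ← setIntegral_Ico_zero_one_eq_intervalIntegral]
        exact setIntegral_congr_fun measurableSet_Ico fun u hu => by
          rw [Int.fract_eq_self.2 hu]

end FractIntegral

section Cell

variable {k : ℕ} {T x : ℝ}

lemma sub_toyA_eq (hk : 0 < k) (hx : 1 ≤ (k : ℝ) * x) (hT : T ∈ Ico (0 : ℝ) 1) :
    x - toyA k T x = Int.fract ((k : ℝ) * x + T) / k := by
  have hj : (1 : ℝ) ≤ ⌊(k : ℝ) * x + T⌋ := by
    exact_mod_cast Int.le_floor.2 (by push_cast; linarith [hT.1])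
  have hcell : 0 ≤ ((⌊(k : ℝ) * x + T⌋ : ℝ) - T) / k :=
    div_nonneg (by linarith [hT.2]) (Nat.cast_nonneg k)
  rw [toyA, max_eq_right hcell, Int.fract]
  field_simp
  ring

lemma toyB_sub_eq (hk : 0 < k) (hx : (k : ℝ) * x ≤ k - 1) (hT : T ∈ Ico (0 : ℝ) 1) :
    toyB k T x - x = (1 - Int.fract ((k : ℝ) * x + T)) / k := by
  have hj : (⌊(k : ℝ) * x + T⌋ : ℝ) + 1 ≤ k := by
    have : ⌊(k : ℝ) * x + T⌋ < (k : ℤ) := Int.floor_lt.2 (by push_cast; linarith [hT.2])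
    exact_mod_cast this
  have hcell : ((⌊(k : ℝ) * x + T⌋ : ℝ) + 1 - T) / k ≤ 1 :=
    (div_le_one (by exact_mod_cast hk)).2 (by linarith [hT.1])
  rw [toyB, min_eq_right hcell, Int.fract]
  field_simp
  ring

lemma setIntegral_toy_cell (F : ℝ → ℝ → ℝ) (hk : 0 < k)
    (hx : x ∈ Icc ((k : ℝ)⁻¹) (1 - (k : ℝ)⁻¹)) :
    ∫ T in Ico (0 : ℝ) 1, F (x - toyA k T x) (toyB k T x - x)
      = ∫ u in (0 : ℝ)..1, F (u / k) ((1 - u) / k) := by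
  have hkR : (0 : ℝ) < k := by exact_mod_cast hk
  have hx₁ : 1 ≤ (k : ℝ) * x := by
    simpa [hkR.ne'] using mul_le_mul_of_nonneg_left hx.1 hkR.le
  have hx₂ : (k : ℝ) * x ≤ k - 1 := by
    simpa [mul_sub, hkR.ne'] using mul_le_mul_of_nonneg_left hx.2 hkR.le
  calc ∫ T in Ico (0 : ℝ) 1, F (x - toyA k T x) (toyB k T x - x)
      = ∫ T in Ico (0 : ℝ) 1,
          F (Int.fract ((k : ℝ) * x + T) / k) ((1 - Int.fract ((k : ℝ) * x + T)) / k) :=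
        setIntegral_congr_fun measurableSet_Ico fun T hT => by
          rw [sub_toyA_eq hk hx₁ hT, toyB_sub_eq hk hx₂ hT]
    _ = ∫ u in (0 : ℝ)..1, F (u / k) ((1 - u) / k) := by
        rw [setIntegral_Ico_zero_one_eq_intervalIntegral,
          intervalIntegral_comp_fract_add (fun u => F (u / k) ((1 - u) / k))]

end Cell

section Moments

variable (c : ℝ)

lemma intervalIntegral_div_mul_one_sub_div :
    ∫ u in (0 : ℝ)..1, (u / c) * ((1 - u) / c) = 1 / (6 * c ^ 2) := by
  have hexpand : ∀ u : ℝ, (u / c) * ((1 - u) / c) = (u - u ^ 2) / c ^ 2 := fun u => by ring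
  simp_rw [hexpand]
  rw [intervalIntegral.integral_div, integral_sub intervalIntegral.intervalIntegrable_id
    (intervalIntegral.intervalIntegrable_pow 2), integral_id, integral_pow]
  ring

lemma intervalIntegral_div_sub_one_sub_div :
    ∫ u in (0 : ℝ)..1, (u / c - (1 - u) / c) = 0 := by
  have hexpand : ∀ u : ℝ, u / c - (1 - u) / c = (2 * u - 1) / c := fun u => by ring
  simp_rw [hexpand]
  rw [intervalIntegral.integral_div, integral_sub (intervalIntegral.intervalIntegrable_id.const_mul 2)
    intervalIntegrable_const, intervalIntegral.integral_const_mul, integral_id]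
  norm_num

lemma intervalIntegral_div_pow_add_one_sub_div_pow (n : ℕ) :
    ∫ u in (0 : ℝ)..1, ((u / c) ^ n + ((1 - u) / c) ^ n) = 2 / ((n + 1 : ℝ) * c ^ n) := by
  have hreflect : ∫ u in (0 : ℝ)..1, ((1 - u) / c) ^ n = ∫ u in (0 : ℝ)..1, (u / c) ^ n := by
    simpa using integral_comp_sub_left (fun u : ℝ => (u / c) ^ n) 1 (a := 0) (b := 1)
  rw [integral_add ((by fun_prop : Continuous fun u : ℝ => (u / c) ^ n).intervalIntegrable _ _)
    ((by fun_prop : Continuous fun u : ℝ => ((1 - u) / c) ^ n).intervalIntegrable _ _), hreflect]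
  simp_rw [div_pow]
  rw [intervalIntegral.integral_div, integral_pow]
  simp only [one_pow, zero_pow n.succ_ne_zero, sub_zero]
  rw [div_mul_eq_div_div]
  ring

end Moments

/-- **Moments of the cell of the toy model, away from the border.**
For `k ≥ 2`, `x ∈ [1/k, 1−1/k]`, with `α = x − A_{U,x}`, `β = B_{U,x} − x` and `T`
uniform on `[0,1)`: `E[αβ] = 1/(6k²)`, `E[α−β] = 0`, and
`E[α^κ + β^κ] = 2/((κ+1)k^κ)` for every integer `κ ≥ 1`. -/
theorem toy_model_moments
    (k : ℕ) (hk : 2 ≤ k)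
    (x : ℝ) (hx : x ∈ Set.Icc ((k : ℝ)⁻¹) (1 - (k : ℝ)⁻¹)) :
    (∫ T in Set.Ico (0 : ℝ) 1, (x - toyA k T x) * (toyB k T x - x))
        = 1 / (6 * (k : ℝ) ^ 2)
    ∧ (∫ T in Set.Ico (0 : ℝ) 1, ((x - toyA k T x) - (toyB k T x - x))) = 0
    ∧ ∀ κ : ℕ, 1 ≤ κ →
        (∫ T in Set.Ico (0 : ℝ) 1, ((x - toyA k T x) ^ κ + (toyB k T x - x) ^ κ))
          = 2 / ((κ + 1 : ℝ) * (k : ℝ) ^ κ) := by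
  have hk₀ : 0 < k := by omega
  refine ⟨?_, ?_, fun κ _ => ?_⟩
  · rw [setIntegral_toy_cell (· * ·) hk₀ hx, intervalIntegral_div_mul_one_sub_div]
  · rw [setIntegral_toy_cell (· - ·) hk₀ hx, intervalIntegral_div_sub_one_sub_div]
  · rw [setIntegral_toy_cell (fun a b => a ^ κ + b ^ κ) hk₀ hx,
      intervalIntegral_div_pow_add_one_sub_div_pow]
end

section
/- Let k ≥ 2 and assume (H2a). Then for every x ∈ [1/k, 1 − 1/k]: (i) 𝓑∞(x) ≤ C₂²/(36 k⁴), and (ii) |𝓥(x) − (s′(x))²/(12 k²)| ≤ (2‖s′‖_∞ C₂ + C₂²)/k³. -/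
/-!
For `v = fract (k x + T)`, which is uniform on `[0, 1)` when `T` is, the cell of `x` is
`[x - v/k, x + (1 - v)/k)`, and for `x ∈ [1/k, 1 - 1/k]` it is never clipped by `[0, 1)`.
Integrating the Taylor bound (H2a) over this cell gives
`s̃_U(x) = s x + s'(x) (1/2 - v) / k + ρ v` with `|ρ v| ≤ C₂ ((1 - v)³ + v³) / (3k²)`.
The linear term has mean zero and `∫₀¹ ((1 - v)³ + v³) dv = 1/2`, which bounds the bias.
The variance is `∫₀¹ (s'(x) (1/2 - v) / k)² dv = s'(x)² / (12k²)`, up to the cross and square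
terms of `ρ`.
-/

open MeasureTheory

/-- The partition projection `s̃_U(x)`: average of `s` over the toy-model cell of `x`. -/
noncomputable def toyProj (k : ℕ) (s : ℝ → ℝ) (T x : ℝ) : ℝ :=
  (∫ t in Set.Ico (toyA k T x) (toyB k T x), s t) / (toyB k T x - toyA k T x)

open Set

lemma setIntegral_Ico_eq_intervalIntegral (f : ℝ → ℝ) {a b : ℝ} (hab : a ≤ b) :
    ∫ t in Ico a b, f t = ∫ t in a..b, f t := by
  rw [intervalIntegral.integral_of_le hab, integral_Ico_eq_integral_Ioc]

lemma setIntegral_Ico_comp_fract_add (F : ℝ → ℝ) (c : ℝ) :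
    ∫ T in Ico (0 : ℝ) 1, F (Int.fract (c + T)) = ∫ v in (0 : ℝ)..1, F v := by
  have hper : Function.Periodic (fun u => F (Int.fract u)) 1 := fun u => by
    simp [Int.fract_add_one]
  rw [setIntegral_Ico_eq_intervalIntegral _ zero_le_one,
    intervalIntegral.integral_comp_add_left (fun u => F (Int.fract u)), add_zero,
    hper.intervalIntegral_add_eq c 0, zero_add,
    ← setIntegral_Ico_eq_intervalIntegral _ zero_le_one,
    ← setIntegral_Ico_eq_intervalIntegral _ zero_le_one]
  exact setIntegral_congr_fun measurableSet_Ico fun u hu => by rw [Int.fract_eq_self.2 hu]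

lemma abs_integral_sub_affine_le {f : ℝ → ℝ} {a b x c L C : ℝ} (hab : a ≤ b)
    (hf : IntervalIntegrable f volume a b)
    (h : ∀ t ∈ Ioo a b, |f t - c - L * (t - x)| ≤ C * (t - x) ^ 2) :
    |(∫ t in a..b, f t) - ((b - a) * c + L * ((b - x) ^ 2 - (a - x) ^ 2) / 2)|
      ≤ C * ((b - x) ^ 3 - (a - x) ^ 3) / 3 := by
  have haff : ∫ t in a..b, (c + L * (t - x))
      = (b - a) * c + L * ((b - x) ^ 2 - (a - x) ^ 2) / 2 := by
    rw [intervalIntegral.integral_add intervalIntegrable_const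
      (Continuous.intervalIntegrable (by fun_prop) _ _), intervalIntegral.integral_const_mul,
      intervalIntegral.integral_comp_sub_right (fun u => u)]
    simp
    ring
  have hquad : ∫ t in a..b, C * (t - x) ^ 2 = C * ((b - x) ^ 3 - (a - x) ^ 3) / 3 := by
    rw [intervalIntegral.integral_const_mul,
      intervalIntegral.integral_comp_sub_right (fun u => u ^ 2)]
    simp
    ring
  rw [← haff, ← hquad, ← intervalIntegral.integral_sub hf
    (Continuous.intervalIntegrable (u := fun t => c + L * (t - x)) (by fun_prop) _ _),
    ← Real.norm_eq_abs]
  refine intervalIntegral.norm_integral_le_of_norm_le hab ?_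
    (Continuous.intervalIntegrable (by fun_prop) _ _)
  filter_upwards [volume.ae_ne b] with t htb ht
  simpa only [Real.norm_eq_abs, sub_add_eq_sub_sub] using h t ⟨ht.1, lt_of_le_of_ne ht.2 htb⟩

lemma intervalIntegrable_of_abs_sub_affine_le {f : ℝ → ℝ} {y c L C : ℝ}
    (hf : ContinuousOn f (Ico 0 1)) (hy : y ∈ Icc (0 : ℝ) 1)
    (h : ∀ t ∈ Ico (0 : ℝ) 1, |f t - c - L * (t - y)| ≤ C * (t - y) ^ 2) :
    IntervalIntegrable f volume 0 1 := by
  rw [intervalIntegrable_iff_integrableOn_Ico_of_le zero_le_one]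
  refine IntegrableOn.of_bound measure_Ico_lt_top (hf.aestronglyMeasurable measurableSet_Ico)
    (|c| + |L| + |C|) ((ae_restrict_iff' measurableSet_Ico).2 (ae_of_all _ fun t ht => ?_))
  have hty : |t - y| ≤ 1 := abs_le.2 ⟨by linarith [ht.1, hy.2], by linarith [ht.2, hy.1]⟩
  have hlin : |L * (t - y)| ≤ |L| := by
    rw [abs_mul]; exact mul_le_of_le_one_right (abs_nonneg L) hty
  have hquad : C * (t - y) ^ 2 ≤ |C| := by
    rw [← sq_abs]
    calc C * |t - y| ^ 2 ≤ |C| * |t - y| ^ 2 := by gcongr; exact le_abs_self C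
      _ ≤ |C| := mul_le_of_le_one_right (abs_nonneg C) (pow_le_one₀ (abs_nonneg _) hty)
  rw [Real.norm_eq_abs]
  calc |f t| = |c + L * (t - y) + (f t - c - L * (t - y))| := by ring_nf
    _ ≤ |c| + |L * (t - y)| + |f t - c - L * (t - y)| := abs_add_three _ _ _
    _ ≤ |c| + |L| + |C| := by linarith [h t ht]

lemma abs_add_sq_sub_sq_le {a b β : ℝ} (hb : |b| ≤ β) :
    |(a + b) ^ 2 - a ^ 2| ≤ 2 * |a| * β + β ^ 2 := by
  calc |(a + b) ^ 2 - a ^ 2| = |2 * a * b + b ^ 2| := by ring_nf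
    _ ≤ |2 * a * b| + |b ^ 2| := abs_add_le _ _
    _ = 2 * |a| * |b| + |b| ^ 2 := by rw [abs_mul, abs_mul, abs_two, abs_pow]
    _ ≤ 2 * |a| * β + β ^ 2 := by gcongr

section NearAffine

variable {g : ℝ → ℝ} {c m δ : ℝ}

lemma abs_intervalIntegral_sub_le_of_near_affine (hg : IntervalIntegrable g volume 0 1)
    (hρ : ∀ v ∈ Icc (0 : ℝ) 1, |g v - c - m * (1 / 2 - v)| ≤ δ * ((1 - v) ^ 3 + v ^ 3)) :
    |(∫ v in (0 : ℝ)..1, g v) - c| ≤ δ / 2 := by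
  have haff : ∫ v in (0 : ℝ)..1, (c + m * (1 / 2 - v)) = c := by
    rw [intervalIntegral.integral_add intervalIntegrable_const
      (Continuous.intervalIntegrable (by fun_prop) _ _), intervalIntegral.integral_const_mul,
      intervalIntegral.integral_comp_sub_left (fun u => u)]
    norm_num
  have hcube : ∫ v in (0 : ℝ)..1, δ * ((1 - v) ^ 3 + v ^ 3) = δ / 2 := by
    rw [intervalIntegral.integral_const_mul, intervalIntegral.integral_add
      (Continuous.intervalIntegrable (by fun_prop) _ _)
      (Continuous.intervalIntegrable (by fun_prop) _ _),
      intervalIntegral.integral_comp_sub_left (fun u => u ^ 3)]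
    norm_num
    ring
  rw [← haff, ← hcube, ← intervalIntegral.integral_sub hg
    (Continuous.intervalIntegrable (u := fun v => c + m * (1 / 2 - v)) (by fun_prop) _ _),
    ← Real.norm_eq_abs]
  refine intervalIntegral.norm_integral_le_of_norm_le zero_le_one (ae_of_all _ fun v hv => ?_)
    (Continuous.intervalIntegrable (by fun_prop) _ _)
  simpa only [Real.norm_eq_abs, sub_add_eq_sub_sub] using hρ v (Ioc_subset_Icc_self hv)

lemma abs_variance_sub_le_of_near_affine (hg : ContinuousOn g (Icc 0 1))
    (hρ : ∀ v ∈ Icc (0 : ℝ) 1, |g v - c - m * (1 / 2 - v)| ≤ δ * ((1 - v) ^ 3 + v ^ 3)) :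
    |(∫ v in (0 : ℝ)..1, (g v - ∫ w in (0 : ℝ)..1, g w) ^ 2) - m ^ 2 / 12|
      ≤ 3 * |m| * δ / 2 + 9 * δ ^ 2 / 4 := by
  set μ := ∫ w in (0 : ℝ)..1, g w
  have hμ : |μ - c| ≤ δ / 2 :=
    abs_intervalIntegral_sub_le_of_near_affine (hg.intervalIntegrable_of_Icc zero_le_one) hρ
  have hδ : 0 ≤ δ := by simpa using (abs_nonneg _).trans (hρ 0 (by simp))
  have hpt : ∀ v ∈ Icc (0 : ℝ) 1,
      |(g v - μ) ^ 2 - (m * (1 / 2 - v)) ^ 2| ≤ 3 * |m| * δ / 2 + 9 * δ ^ 2 / 4 := by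
    intro v hv
    have hcube : (1 - v) ^ 3 + v ^ 3 ≤ 1 := by nlinarith [mul_nonneg hv.1 (sub_nonneg.2 hv.2)]
    have hρv : |g v - c - m * (1 / 2 - v)| ≤ δ :=
      (hρ v hv).trans (mul_le_of_le_one_right hδ hcube)
    have hlin : |m * (1 / 2 - v)| ≤ |m| / 2 := by
      rw [abs_mul]
      have : |1 / 2 - v| ≤ 1 / 2 := abs_le.2 ⟨by linarith [hv.2], by linarith [hv.1]⟩
      nlinarith [abs_nonneg m]
    have hrest : |(g v - c - m * (1 / 2 - v)) - (μ - c)| ≤ 3 * δ / 2 := by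
      linarith [abs_sub (g v - c - m * (1 / 2 - v)) (μ - c)]
    calc |(g v - μ) ^ 2 - (m * (1 / 2 - v)) ^ 2|
        = |(m * (1 / 2 - v) + ((g v - c - m * (1 / 2 - v)) - (μ - c))) ^ 2
            - (m * (1 / 2 - v)) ^ 2| := by ring_nf
      _ ≤ 2 * |m * (1 / 2 - v)| * (3 * δ / 2) + (3 * δ / 2) ^ 2 := abs_add_sq_sub_sq_le hrest
      _ ≤ 2 * (|m| / 2) * (3 * δ / 2) + (3 * δ / 2) ^ 2 := by gcongr
      _ = 3 * |m| * δ / 2 + 9 * δ ^ 2 / 4 := by ring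
  have hquad : ∫ v in (0 : ℝ)..1, (m * (1 / 2 - v)) ^ 2 = m ^ 2 / 12 := by
    simp_rw [mul_pow]
    rw [intervalIntegral.integral_const_mul,
      intervalIntegral.integral_comp_sub_left (fun u => u ^ 2)]
    norm_num
    ring
  rw [← hquad, ← intervalIntegral.integral_sub
    (ContinuousOn.intervalIntegrable_of_Icc (u := fun v => (g v - μ) ^ 2) zero_le_one
      (by fun_prop))
    (Continuous.intervalIntegrable (by fun_prop) _ _)]
  have := intervalIntegral.norm_integral_le_of_norm_le_const
    (f := fun v => (g v - μ) ^ 2 - (m * (1 / 2 - v)) ^ 2) fun v hv =>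
    hpt v (Ioc_subset_Icc_self (by rwa [uIoc_of_le zero_le_one] at hv))
  rwa [Real.norm_eq_abs, sub_zero, abs_one, mul_one] at this

end NearAffine

noncomputable def cellMean (k : ℕ) (f : ℝ → ℝ) (x v : ℝ) : ℝ :=
  k * ∫ t in (x - v / k)..(x + (1 - v) / k), f t

lemma cell_length (k : ℕ) (x v : ℝ) : x + (1 - v) / k - (x - v / k) = (k : ℝ)⁻¹ := by
  ring

lemma cell_left_le_right (k : ℕ) (x v : ℝ) : x - v / k ≤ x + (1 - v) / k := by
  rw [← sub_nonneg, cell_length]; positivity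

lemma fract_mem_Icc (a : ℝ) : Int.fract a ∈ Icc (0 : ℝ) 1 :=
  ⟨Int.fract_nonneg a, (Int.fract_lt_one a).le⟩

section Cell

variable {k : ℕ} {x : ℝ}

lemma cell_endpoints_mem_Icc (hx : x ∈ Icc ((k : ℝ)⁻¹) (1 - (k : ℝ)⁻¹)) {v : ℝ}
    (hv : v ∈ Icc (0 : ℝ) 1) :
    x - v / k ∈ Icc (0 : ℝ) 1 ∧ x + (1 - v) / k ∈ Icc (0 : ℝ) 1 := by
  have hk : (0 : ℝ) ≤ (k : ℝ)⁻¹ := by positivity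
  have h₁ : v / k ≤ (k : ℝ)⁻¹ := by rw [div_eq_mul_inv]; nlinarith [hv.2]
  have h₂ : (1 - v) / k ≤ (k : ℝ)⁻¹ := by rw [div_eq_mul_inv]; nlinarith [hv.1]
  have h₃ : 0 ≤ v / k := div_nonneg hv.1 (Nat.cast_nonneg k)
  have h₄ : 0 ≤ (1 - v) / k := div_nonneg (by linarith [hv.2]) (Nat.cast_nonneg k)
  exact ⟨⟨by linarith [hx.1], by linarith [hx.2]⟩, ⟨by linarith [hx.1], by linarith [hx.2]⟩⟩

lemma mem_Ico_of_mem_Icc_inv (hk : 0 < k) (hx : x ∈ Icc ((k : ℝ)⁻¹) (1 - (k : ℝ)⁻¹)) :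
    x ∈ Ico (0 : ℝ) 1 :=
  ⟨(inv_nonneg.2 (Nat.cast_nonneg k)).trans hx.1, hx.2.trans_lt (sub_lt_self 1 (by positivity))⟩

lemma toyA_eq (hk : 0 < k) (hx : x ∈ Icc ((k : ℝ)⁻¹) (1 - (k : ℝ)⁻¹)) (T : ℝ) :
    toyA k T x = x - Int.fract (k * x + T) / k := by
  have hk' : (k : ℝ) ≠ 0 := by positivity
  rw [toyA, ← Int.self_sub_fract, show ((k * x + T - Int.fract (k * x + T)) - T) / k
    = x - Int.fract (k * x + T) / k by field_simp; ring]
  exact max_eq_right (cell_endpoints_mem_Icc hx (fract_mem_Icc _)).1.1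

lemma toyB_eq (hk : 0 < k) (hx : x ∈ Icc ((k : ℝ)⁻¹) (1 - (k : ℝ)⁻¹)) (T : ℝ) :
    toyB k T x = x + (1 - Int.fract (k * x + T)) / k := by
  have hk' : (k : ℝ) ≠ 0 := by positivity
  rw [toyB, ← Int.self_sub_fract, show (k * x + T - Int.fract (k * x + T) + 1 - T) / k
    = x + (1 - Int.fract (k * x + T)) / k by field_simp; ring]
  exact min_eq_right (cell_endpoints_mem_Icc hx (fract_mem_Icc _)).2.2

lemma toyProj_eq_cellMean (hk : 0 < k) (hx : x ∈ Icc ((k : ℝ)⁻¹) (1 - (k : ℝ)⁻¹))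
    (s : ℝ → ℝ) (T : ℝ) :
    toyProj k s T x = cellMean k s x (Int.fract (k * x + T)) := by
  rw [toyProj, toyA_eq hk hx, toyB_eq hk hx, cell_length,
    setIntegral_Ico_eq_intervalIntegral _ (cell_left_le_right _ _ _), cellMean, div_inv_eq_mul,
    mul_comm]

lemma setIntegral_comp_toyProj (hk : 0 < k) (hx : x ∈ Icc ((k : ℝ)⁻¹) (1 - (k : ℝ)⁻¹))
    (s F : ℝ → ℝ) :
    ∫ T in Ico (0 : ℝ) 1, F (toyProj k s T x) = ∫ v in (0 : ℝ)..1, F (cellMean k s x v) := by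
  simp_rw [toyProj_eq_cellMean hk hx]
  exact setIntegral_Ico_comp_fract_add (fun v => F (cellMean k s x v)) _

lemma continuousOn_cellMean {f : ℝ → ℝ} (hf : IntervalIntegrable f volume 0 1)
    (hx : x ∈ Icc ((k : ℝ)⁻¹) (1 - (k : ℝ)⁻¹)) : ContinuousOn (cellMean k f x) (Icc 0 1) := by
  have hF : ContinuousOn (fun y => ∫ t in (0 : ℝ)..y, f t) (Icc 0 1) := by
    simpa [uIcc_of_le zero_le_one] using
      intervalIntegral.continuousOn_primitive_interval' hf left_mem_uIcc
  have hint : ∀ y ∈ Icc (0 : ℝ) 1, IntervalIntegrable f volume 0 y := fun y hy =>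
    hf.mono_set (uIcc_subset_uIcc left_mem_uIcc (by rwa [uIcc_of_le zero_le_one]))
  refine ContinuousOn.congr (f := fun v => k * ((∫ t in (0 : ℝ)..(x + (1 - v) / k), f t)
      - ∫ t in (0 : ℝ)..(x - v / k), f t)) ?_ fun v hv => ?_
  · refine continuousOn_const.mul (ContinuousOn.sub ?_ ?_) <;>
      refine hF.comp (by fun_prop) fun v hv => ?_
    exacts [(cell_endpoints_mem_Icc hx hv).2, (cell_endpoints_mem_Icc hx hv).1]
  · obtain ⟨ha, hb⟩ := cell_endpoints_mem_Icc hx hv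
    dsimp only
    rw [cellMean, intervalIntegral.integral_interval_sub_left (hint _ hb) (hint _ ha)]

lemma abs_cellMean_sub_affine_le (hk : 0 < k) {f : ℝ → ℝ} {c L C v : ℝ}
    (hf : IntervalIntegrable f volume (x - v / k) (x + (1 - v) / k))
    (h : ∀ t ∈ Ioo (x - v / k) (x + (1 - v) / k), |f t - c - L * (t - x)| ≤ C * (t - x) ^ 2) :
    |cellMean k f x v - c - L / k * (1 / 2 - v)| ≤ C / (3 * k ^ 2) * ((1 - v) ^ 3 + v ^ 3) := by
  have hk' : (0 : ℝ) < k := by positivity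
  have htaylor := abs_integral_sub_affine_le (cell_left_le_right k x v) hf h
  calc |cellMean k f x v - c - L / k * (1 / 2 - v)|
      = |k * ((∫ t in (x - v / k)..(x + (1 - v) / k), f t)
          - ((x + (1 - v) / k - (x - v / k)) * c
            + L * ((x + (1 - v) / k - x) ^ 2 - (x - v / k - x) ^ 2) / 2))| := by
        rw [cellMean]
        congr 1
        field_simp
        ring
    _ = k * |(∫ t in (x - v / k)..(x + (1 - v) / k), f t)
          - ((x + (1 - v) / k - (x - v / k)) * c
            + L * ((x + (1 - v) / k - x) ^ 2 - (x - v / k - x) ^ 2) / 2)| := by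
        rw [abs_mul, abs_of_pos hk']
    _ ≤ k * (C * ((x + (1 - v) / k - x) ^ 3 - (x - v / k - x) ^ 3) / 3) := by gcongr
    _ = C / (3 * k ^ 2) * ((1 - v) ^ 3 + v ^ 3) := by
        field_simp
        ring

lemma abs_cellMean_sub_le_of_taylor (hk : 0 < k) (hx : x ∈ Icc ((k : ℝ)⁻¹) (1 - (k : ℝ)⁻¹))
    {f : ℝ → ℝ} {L C : ℝ} (hf : IntervalIntegrable f volume 0 1)
    (h : ∀ t ∈ Ico (0 : ℝ) 1, |f t - f x - L * (t - x)| ≤ C * (t - x) ^ 2)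
    {v : ℝ} (hv : v ∈ Icc (0 : ℝ) 1) :
    |cellMean k f x v - f x - L / k * (1 / 2 - v)| ≤ C / (3 * k ^ 2) * ((1 - v) ^ 3 + v ^ 3) := by
  obtain ⟨ha, hb⟩ := cell_endpoints_mem_Icc hx hv
  refine abs_cellMean_sub_affine_le hk (hf.mono_set ?_) fun t ht => h t ?_
  · simpa [uIcc_of_le zero_le_one] using uIcc_subset_Icc ha hb
  · exact ⟨ha.1.trans ht.1.le, ht.2.trans_le hb.2⟩

end Cell

lemma variance_error_le {k d M C : ℝ} (hk : 1 ≤ k) (hd : |d| ≤ M) (hC : 0 ≤ C) :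
    3 * |d / k| * (C / (3 * k ^ 2)) / 2 + 9 * (C / (3 * k ^ 2)) ^ 2 / 4
      ≤ (2 * M * C + C ^ 2) / k ^ 3 := by
  have hk0 : 0 < k := by linarith
  have hM : 0 ≤ M := (abs_nonneg d).trans hd
  rw [abs_div, abs_of_pos hk0]
  calc _ ≤ 3 * (M / k) * (C / (3 * k ^ 2)) / 2 + 9 * (C / (3 * k ^ 2)) ^ 2 / 4 := by gcongr
    _ = (M * C / 2 + C ^ 2 / (4 * k)) / k ^ 3 := by field_simp; ring
    _ ≤ (2 * M * C + C ^ 2) / k ^ 3 := by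
        gcongr
        · nlinarith [mul_nonneg hM hC]
        · exact div_le_self (sq_nonneg C) (by linarith)

/-- **Bias of trees and infinite forests in the toy model under (H2a).**
Assume `s` is differentiable on `[0,1)` with derivative `ds`,
`|s t − s x − ds x (t−x)| ≤ C₂ (t−x)²` on `[0,1)` and `|ds| ≤ M` on `[0,1)`.
Then for `k ≥ 2` and `x ∈ [1/k, 1−1/k]`, the infinite-forest bias satisfies
`𝓑∞(x) ≤ C₂²/(36k⁴)`, and the variance term of a single tree satisfies
`|𝓥(x) − (ds x)²/(12k²)| ≤ (2 M C₂ + C₂²)/k³`. -/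
theorem toy_model_bias_H2a
    (k : ℕ) (hk : 2 ≤ k)
    (s ds : ℝ → ℝ) (C₂ M : ℝ) (hC₂ : 0 < C₂)
    (hdiff : ∀ y ∈ Set.Ico (0 : ℝ) 1, HasDerivWithinAt s (ds y) (Set.Ico (0 : ℝ) 1) y)
    (hH2a : ∀ t ∈ Set.Ico (0 : ℝ) 1, ∀ y ∈ Set.Ico (0 : ℝ) 1,
        |s t - s y - ds y * (t - y)| ≤ C₂ * (t - y) ^ 2)
    (hM : ∀ y ∈ Set.Ico (0 : ℝ) 1, |ds y| ≤ M)
    (x : ℝ) (hx : x ∈ Set.Icc ((k : ℝ)⁻¹) (1 - (k : ℝ)⁻¹)) :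
    (s x - ∫ T in Set.Ico (0 : ℝ) 1, toyProj k s T x) ^ 2
        ≤ C₂ ^ 2 / (36 * (k : ℝ) ^ 4)
    ∧ |(∫ T in Set.Ico (0 : ℝ) 1,
          (toyProj k s T x - ∫ T' in Set.Ico (0 : ℝ) 1, toyProj k s T' x) ^ 2)
          - (ds x) ^ 2 / (12 * (k : ℝ) ^ 2)|
        ≤ (2 * M * C₂ + C₂ ^ 2) / (k : ℝ) ^ 3 := by
  have hk0 : 0 < k := by omega
  have hxI := mem_Ico_of_mem_Icc_inv hk0 hx
  have hs : IntervalIntegrable s volume 0 1 :=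
    intervalIntegrable_of_abs_sub_affine_le (fun y hy => (hdiff y hy).continuousWithinAt)
      (Ico_subset_Icc_self hxI) fun t ht => hH2a t ht x hxI
  have hnear := fun v (hv : v ∈ Icc (0 : ℝ) 1) =>
    abs_cellMean_sub_le_of_taylor hk0 hx hs (fun t ht => hH2a t ht x hxI) hv
  have hcont := continuousOn_cellMean hs hx
  have hE : ∫ T in Ico (0 : ℝ) 1, toyProj k s T x = ∫ v in (0 : ℝ)..1, cellMean k s x v :=
    setIntegral_comp_toyProj hk0 hx s id
  set E := ∫ T in Ico (0 : ℝ) 1, toyProj k s T x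
  have hV : ∫ T in Ico (0 : ℝ) 1, (toyProj k s T x - E) ^ 2
      = ∫ v in (0 : ℝ)..1, (cellMean k s x v - E) ^ 2 :=
    setIntegral_comp_toyProj hk0 hx s fun y => (y - E) ^ 2
  rw [hV, hE]
  constructor
  · have hbias := abs_intervalIntegral_sub_le_of_near_affine
      (hcont.intervalIntegrable_of_Icc zero_le_one) hnear
    rw [← sq_abs, abs_sub_comm]
    calc _ ≤ (C₂ / (3 * k ^ 2) / 2) ^ 2 := by gcongr
      _ = C₂ ^ 2 / (36 * (k : ℝ) ^ 4) := by ring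
  · have hvar := abs_variance_sub_le_of_near_affine hcont hnear
    rw [div_pow, div_div, mul_comm ((k : ℝ) ^ 2)] at hvar
    exact hvar.trans (variance_error_le (by exact_mod_cast hk0) (hM x hxI) hC₂.le)
end

section
/- Let k ≥ 1, x ∈ (0,1), and in the PURF model set α = x − A_{U,x} and β = B_{U,x} − x. Writing P_j(x) := x^j + (1−x)^j, one has: E[α − β] = (x^{k+1} − (1−x)^{k+1})/(k+1); E[αβ] = (1 − P_{k+2}(x))/((k+1)(k+2)); and E[α² + β²] = 4/((k+1)(k+2)) − 2((1−x)x^{k+1} + x(1−x)^{k+1})/(k+1) − 2 P_{k+2}(x)/((k+1)(k+2)). -/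
open MeasureTheory

/-- In the PURF model with split points `ξs : Fin k → ℝ`, the left endpoint of the cell
containing `x`: `A_{U,x} = max{ξ_i : ξ_i ≤ x}`, with the convention `max ∅ = 0`. -/
noncomputable def purfA {k : ℕ} (x : ℝ) (ξs : Fin k → ℝ) : ℝ :=
  sSup (insert 0 {y : ℝ | (∃ i : Fin k, ξs i = y) ∧ y ≤ x})

/-- In the PURF model, the right endpoint of the cell containing `x`:
`B_{U,x} = min{ξ_i : ξ_i > x}`, with the convention `min ∅ = 1`. -/
noncomputable def purfB {k : ℕ} (x : ℝ) (ξs : Fin k → ℝ) : ℝ :=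
  sInf (insert 1 {y : ℝ | (∃ i : Fin k, ξs i = y) ∧ x < y})

open Set

/-!
Write `α = x - A_{U,x}` and `β = B_{U,x} - x`. The event `{s < α, t < β}` says that no split point
falls in `[x - s, x + t]`, so under the uniform product measure it has probability
`(1 - (s + t)) ^ k`; in particular `P(s < α) = (1 - s) ^ k` and `P(t < β) = (1 - t) ^ k`.
The moments then follow from the layer-cake formula `E[G(α)] = ∫ G'(t) P(t < α) dt` for `G(t) = t`
and `G(t) = t ^ 2`, and from `E[αβ] = ∬ P(s < α, t < β) ds dt` (Tonelli); what remains are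
integrals of powers of `1 - t`.
-/

theorem integral_const_sub_pow (d c : ℝ) (m : ℕ) :
    ∫ t in (0 : ℝ)..c, (d - t) ^ m = (d ^ (m + 1) - (d - c) ^ (m + 1)) / (m + 1) := by
  rw [intervalIntegral.integral_comp_sub_left (· ^ m), integral_pow]
  norm_num

theorem integral_integral_one_sub_add_pow (a b : ℝ) (k : ℕ) :
    ∫ s in (0 : ℝ)..a, ∫ t in (0 : ℝ)..b, (1 - (s + t)) ^ k
      = (1 - (1 - a) ^ (k + 2) - (1 - b) ^ (k + 2) + (1 - a - b) ^ (k + 2))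
        / ((k + 1) * (k + 2)) := by
  have hinner : ∀ s : ℝ, ∫ t in (0 : ℝ)..b, (1 - (s + t)) ^ k
      = ((1 - s) ^ (k + 1) - ((1 - b) - s) ^ (k + 1)) / (k + 1) := fun s => by
    simp_rw [← sub_sub, integral_const_sub_pow, sub_right_comm]
  simp_rw [hinner]
  rw [intervalIntegral.integral_div, intervalIntegral.integral_sub
      ((by fun_prop : Continuous _).intervalIntegrable _ _)
      ((by fun_prop : Continuous _).intervalIntegrable _ _),
    integral_const_sub_pow, integral_const_sub_pow]
  push_cast
  field_simp
  ring

section Layercake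

variable {X : Type*} [MeasurableSpace X] {μ : Measure X}

theorem integral_primitive_comp_eq_of_measureReal_lt [IsFiniteMeasure μ] {f : X → ℝ}
    {g T : ℝ → ℝ} {c : ℝ} (hc : 0 ≤ c) (hf : Measurable f) (hf0 : ∀ ω, 0 ≤ f ω)
    (hfc : ∀ ω, f ω ≤ c)
    (hg : Continuous g) (hg0 : ∀ t, 0 ≤ t → 0 ≤ g t) (hT : Continuous T)
    (htail : ∀ t ∈ Ioo 0 c, μ.real {ω | t < f ω} = T t) :
    ∫ ω, (∫ t in 0..f ω, g t) ∂μ = ∫ t in 0..c, g t * T t := by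
  have hgT0 : ∀ t ∈ Ioo 0 c, 0 ≤ g t * T t := fun t ht =>
    mul_nonneg (hg0 t ht.1.le) (htail t ht ▸ measureReal_nonneg)
  have hG : Continuous fun y => ∫ t in 0..y, g t :=
    intervalIntegral.continuous_primitive (fun _ _ => hg.intervalIntegrable _ _) 0
  have hint : IntegrableOn (fun t => g t * T t) (Ioo 0 c) :=
    ((hg.mul hT).integrableOn_Icc).mono_set Ioo_subset_Icc_self
  have hcut : (Ioi 0).indicator (fun t => μ {ω | t < f ω} * ENNReal.ofReal (g t))
      = (Ioo 0 c).indicator (fun t => ENNReal.ofReal (g t * T t)) := by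
    ext t
    by_cases ht : t ∈ Ioo 0 c
    · rw [indicator_of_mem ht, indicator_of_mem (mem_Ioi.2 ht.1), ← ofReal_measureReal,
        htail t ht, ENNReal.ofReal_mul (hg0 t ht.1.le), mul_comm]
    · rw [indicator_of_notMem ht]
      by_cases ht0 : t ∈ Ioi 0
      · have hempty : {ω | t < f ω} = ∅ := by
          ext ω
          simp only [mem_ofPred_eq, mem_empty_iff_false, iff_false, not_lt]
          exact (hfc ω).trans (not_lt.1 fun h => ht ⟨ht0, h⟩)
        rw [indicator_of_mem ht0, hempty, measure_empty, zero_mul]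
      · exact indicator_of_notMem ht0 _
  rw [integral_eq_lintegral_of_nonneg_ae
      (ae_of_all _ fun ω =>
        intervalIntegral.integral_nonneg (hf0 ω) fun t ht => hg0 t ht.1)
      (hG.measurable.comp hf).aestronglyMeasurable,
    lintegral_comp_eq_lintegral_meas_lt_mul μ (ae_of_all _ hf0)
      hf.aemeasurable (fun _ _ => hg.intervalIntegrable _ _)
      ((ae_restrict_iff' measurableSet_Ioi).2 (ae_of_all _ fun t ht => hg0 t (le_of_lt ht))),
    ← lintegral_indicator measurableSet_Ioi, hcut, lintegral_indicator measurableSet_Ioo,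
    ← ofReal_integral_eq_lintegral_ofReal hint
      ((ae_restrict_iff' measurableSet_Ioo).2 (ae_of_all _ hgT0)),
    ENNReal.toReal_ofReal (setIntegral_nonneg measurableSet_Ioo hgT0),
    intervalIntegral.integral_of_le hc, integral_Ioc_eq_integral_Ioo]

-- Tonelli on `{(ω, s, t) | s < f ω ∧ t < g ω}`, whose `ω`-sections are rectangles of area
-- `f ω * g ω`.
theorem lintegral_ofReal_mul_eq_setLIntegral_measure_lt [SFinite μ] {f g : X → ℝ} {a b : ℝ}
    (hf : Measurable f) (hg : Measurable g) (hf0 : ∀ ω, 0 ≤ f ω) (hfa : ∀ ω, f ω ≤ a)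
    (hgb : ∀ ω, g ω ≤ b) :
    ∫⁻ ω, ENNReal.ofReal (f ω * g ω) ∂μ
      = ∫⁻ p in Ioo 0 a ×ˢ Ioo 0 b, μ {ω | p.1 < f ω ∧ p.2 < g ω} := by
  set E := {q : X × ℝ × ℝ | q.2.1 < f q.1 ∧ q.2.2 < g q.1}
  have hE : MeasurableSet E :=
    (measurableSet_lt measurable_snd.fst (hf.comp measurable_fst)).inter
      (measurableSet_lt measurable_snd.snd (hg.comp measurable_fst))
  have hsection : ∀ ω, (volume.restrict (Ioo 0 a)).prod (volume.restrict (Ioo 0 b))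
      (Prod.mk ω ⁻¹' E) = ENNReal.ofReal (f ω * g ω) := fun ω => by
    have hrect : Prod.mk ω ⁻¹' E = Iio (f ω) ×ˢ Iio (g ω) := rfl
    rw [hrect, Measure.prod_prod, Measure.restrict_apply measurableSet_Iio,
      Measure.restrict_apply measurableSet_Iio, Iio_inter_Ioo, Iio_inter_Ioo,
      min_eq_left (hfa ω), min_eq_left (hgb ω), Real.volume_Ioo, Real.volume_Ioo, sub_zero,
      sub_zero, ENNReal.ofReal_mul (hf0 ω)]
  simp_rw [← hsection]
  rw [← Measure.prod_apply hE, Measure.prod_apply_symm hE, Measure.volume_eq_prod,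
    Measure.prod_restrict]
  rfl

theorem integral_mul_eq_of_measureReal_lt [IsFiniteMeasure μ] {f g : X → ℝ} {J : ℝ → ℝ → ℝ}
    {a b : ℝ} (ha : 0 ≤ a) (hb : 0 ≤ b) (hf : Measurable f) (hg : Measurable g)
    (hf0 : ∀ ω, 0 ≤ f ω) (hfa : ∀ ω, f ω ≤ a) (hg0 : ∀ ω, 0 ≤ g ω) (hgb : ∀ ω, g ω ≤ b)
    (hJ : Continuous (Function.uncurry J))
    (hjoint : ∀ s ∈ Ioo 0 a, ∀ t ∈ Ioo 0 b, μ.real {ω | s < f ω ∧ t < g ω} = J s t) :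
    ∫ ω, f ω * g ω ∂μ = ∫ s in 0..a, ∫ t in 0..b, J s t := by
  have hbox : MeasurableSet (Ioo (0 : ℝ) a ×ˢ Ioo (0 : ℝ) b) :=
    measurableSet_Ioo.prod measurableSet_Ioo
  have hJ0 : ∀ᵐ p ∂volume.restrict (Ioo (0 : ℝ) a ×ˢ Ioo (0 : ℝ) b), 0 ≤ J p.1 p.2 :=
    (ae_restrict_iff' hbox).2 (ae_of_all _ fun p hp => hjoint p.1 hp.1 p.2 hp.2 ▸
      measureReal_nonneg)
  have hint : IntegrableOn (fun p : ℝ × ℝ => J p.1 p.2) (Ioo (0 : ℝ) a ×ˢ Ioo (0 : ℝ) b) :=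
    (hJ.continuousOn.integrableOn_compact (isCompact_Icc.prod isCompact_Icc)).mono_set
      (prod_mono Ioo_subset_Icc_self Ioo_subset_Icc_self)
  calc ∫ ω, f ω * g ω ∂μ
      = (∫⁻ ω, ENNReal.ofReal (f ω * g ω) ∂μ).toReal :=
        integral_eq_lintegral_of_nonneg_ae (ae_of_all _ fun ω => mul_nonneg (hf0 ω) (hg0 ω))
          (hf.mul hg).aestronglyMeasurable
    _ = (∫⁻ p in Ioo 0 a ×ˢ Ioo 0 b, ENNReal.ofReal (J p.1 p.2)).toReal := by
        rw [lintegral_ofReal_mul_eq_setLIntegral_measure_lt hf hg hf0 hfa hgb]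
        refine congrArg _ (setLIntegral_congr_fun hbox fun p hp => ?_)
        rw [← hjoint p.1 hp.1 p.2 hp.2, ofReal_measureReal]
    _ = ∫ p in Ioo 0 a ×ˢ Ioo 0 b, J p.1 p.2 := by
        rw [← ofReal_integral_eq_lintegral_ofReal hint hJ0,
          ENNReal.toReal_ofReal (integral_nonneg_of_ae hJ0)]
    _ = ∫ s in 0..a, ∫ t in 0..b, J s t := by
        rw [Measure.volume_eq_prod, ← Measure.prod_restrict, integral_prod _
            (by rwa [Measure.prod_restrict, ← Measure.volume_eq_prod]),
          intervalIntegral.integral_of_le ha, integral_Ioc_eq_integral_Ioo]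
        refine setIntegral_congr_fun measurableSet_Ioo fun s _ => ?_
        rw [intervalIntegral.integral_of_le hb, integral_Ioc_eq_integral_Ioo]

theorem integral_eq_of_measureReal_lt_eq_one_sub_pow [IsFiniteMeasure μ] {f : X → ℝ} {c : ℝ} (k : ℕ)
    (hc : 0 ≤ c) (hf : Measurable f) (hf0 : ∀ ω, 0 ≤ f ω) (hfc : ∀ ω, f ω ≤ c)
    (htail : ∀ t ∈ Ioo 0 c, μ.real {ω | t < f ω} = (1 - t) ^ k) :
    ∫ ω, f ω ∂μ = (1 - (1 - c) ^ (k + 1)) / (k + 1) := by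
  have h := integral_primitive_comp_eq_of_measureReal_lt hc hf hf0 hfc continuous_const
    (fun _ _ => zero_le_one) (by fun_prop) htail
  simp only [integral_one, sub_zero, one_mul] at h
  rw [h, integral_const_sub_pow, one_pow]

theorem integral_sq_eq_of_measureReal_lt_eq_one_sub_pow [IsFiniteMeasure μ] {f : X → ℝ} {c : ℝ}
    (k : ℕ) (hc : 0 ≤ c) (hf : Measurable f) (hf0 : ∀ ω, 0 ≤ f ω) (hfc : ∀ ω, f ω ≤ c)
    (htail : ∀ t ∈ Ioo 0 c, μ.real {ω | t < f ω} = (1 - t) ^ k) :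
    ∫ ω, f ω ^ 2 ∂μ
      = 2 * (1 - (1 - c) ^ (k + 1)) / (k + 1) - 2 * (1 - (1 - c) ^ (k + 2)) / (k + 2) := by
  have h := integral_primitive_comp_eq_of_measureReal_lt hc hf hf0 hfc
    (continuous_const_mul 2) (fun _ ht => mul_nonneg zero_le_two ht) (by fun_prop) htail
  have hprim : ∀ y : ℝ, ∫ t in (0 : ℝ)..y, 2 * t = y ^ 2 := fun y => by
    rw [intervalIntegral.integral_const_mul, integral_id]
    ring
  have hsplit : ∀ t : ℝ, 2 * t * (1 - t) ^ k = 2 * (1 - t) ^ k - 2 * (1 - t) ^ (k + 1) :=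
    fun t => by ring
  simp only [hprim, hsplit] at h
  rw [h, intervalIntegral.integral_sub ((by fun_prop : Continuous _).intervalIntegrable _ _)
      ((by fun_prop : Continuous _).intervalIntegrable _ _),
    intervalIntegral.integral_const_mul, intervalIntegral.integral_const_mul,
    integral_const_sub_pow, integral_const_sub_pow, one_pow, one_pow]
  push_cast
  ring

end Layercake

theorem measureReal_pi_forall_notMem {ι α : Type*} [Fintype ι] [MeasurableSpace α]
    (ν : Measure α) [IsProbabilityMeasure ν] {T : Set α} (hT : MeasurableSet T) :
    (Measure.pi fun _ : ι => ν).real {ξ | ∀ i, ξ i ∉ T} = (1 - ν.real T) ^ Fintype.card ι := by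
  have hpi : {ξ : ι → α | ∀ i, ξ i ∉ T} = univ.pi fun _ => Tᶜ := by
    ext ξ
    simp
  rw [hpi, measureReal_def, Measure.pi_pi, Finset.prod_const, Finset.card_univ,
    ENNReal.toReal_pow, ← measureReal_def, probReal_compl_eq_one_sub hT]

section Purf

variable {k : ℕ} {x c s t : ℝ} {ξs : Fin k → ℝ}

theorem purfA_lt_iff : purfA x ξs < c ↔ 0 < c ∧ ∀ i, ξs i ≤ x → ξs i < c := by
  have hfin : {y : ℝ | (∃ i : Fin k, ξs i = y) ∧ y ≤ x}.Finite :=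
    (finite_range ξs).subset fun _ hy => hy.1
  rw [purfA, (hfin.insert 0).csSup_lt_iff (insert_nonempty _ _), forall_mem_insert]
  simp

theorem lt_purfB_iff : c < purfB x ξs ↔ c < 1 ∧ ∀ i, x < ξs i → c < ξs i := by
  have hfin : {y : ℝ | (∃ i : Fin k, ξs i = y) ∧ x < y}.Finite :=
    (finite_range ξs).subset fun _ hy => hy.1
  rw [purfB, (hfin.insert 1).lt_csInf_iff (insert_nonempty _ _), forall_mem_insert]
  simp

theorem purfA_nonneg : 0 ≤ purfA x ξs :=
  not_lt.1 fun h => lt_irrefl 0 (purfA_lt_iff.1 h).1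

theorem purfA_le (hx : 0 ≤ x) : purfA x ξs ≤ x :=
  le_of_forall_gt fun _ hc => purfA_lt_iff.2 ⟨hx.trans_lt hc, fun _ hi => hi.trans_lt hc⟩

theorem purfB_le_one : purfB x ξs ≤ 1 :=
  not_lt.1 fun h => lt_irrefl 1 (lt_purfB_iff.1 h).1

theorem le_purfB (hx : x ≤ 1) : x ≤ purfB x ξs :=
  le_of_forall_lt fun _ hc => lt_purfB_iff.2 ⟨hc.trans_le hx, fun _ hi => hc.trans hi⟩

theorem sub_purfA_mem_Icc (hx : 0 ≤ x) : x - purfA x ξs ∈ Icc 0 x :=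
  ⟨sub_nonneg.2 (purfA_le hx), sub_le_self _ purfA_nonneg⟩

theorem purfB_sub_mem_Icc (hx : x ≤ 1) : purfB x ξs - x ∈ Icc 0 (1 - x) :=
  ⟨sub_nonneg.2 (le_purfB hx), sub_le_sub_right purfB_le_one x⟩

theorem measurable_purfA : Measurable fun ξs : Fin k → ℝ => purfA x ξs := by
  refine measurable_of_Iio fun _ => ?_
  simp_rw [preimage, mem_Iio, purfA_lt_iff]
  measurability

theorem measurable_purfB : Measurable fun ξs : Fin k → ℝ => purfB x ξs := by
  refine measurable_of_Ioi fun _ => ?_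
  simp_rw [preimage, mem_Ioi, lt_purfB_iff]
  measurability

theorem measurable_sub_purfA : Measurable fun ξs : Fin k → ℝ => x - purfA x ξs :=
  measurable_const.sub measurable_purfA

theorem measurable_purfB_sub : Measurable fun ξs : Fin k → ℝ => purfB x ξs - x :=
  measurable_purfB.sub measurable_const

theorem lt_sub_purfA_iff (hs : s < x) :
    s < x - purfA x ξs ↔ ∀ i, ξs i ∉ Icc (x - s) x := by
  rw [lt_sub_comm, purfA_lt_iff]
  simp [sub_pos.2 hs, imp_iff_not_or, lt_sub_iff_add_lt, or_comm]

theorem lt_purfB_sub_iff (ht : x + t < 1) :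
    t < purfB x ξs - x ↔ ∀ i, ξs i ∉ Ioc x (x + t) := by
  rw [lt_sub_iff_add_lt', lt_purfB_iff]
  simp [ht, imp_iff_not_or]

local notation "𝒰" => Measure.restrict (volume : Measure ℝ) (Ico (0 : ℝ) 1)

instance : IsProbabilityMeasure 𝒰 :=
  ⟨by rw [Measure.restrict_apply_univ, Real.volume_Ico]; norm_num⟩

theorem measureReal_pi_uniform_forall_notMem {T : Set ℝ} (hT : MeasurableSet T)
    (hT01 : T ⊆ Ico 0 1) :
    (Measure.pi fun _ : Fin k => 𝒰).real {ξs | ∀ i, ξs i ∉ T} = (1 - volume.real T) ^ k := by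
  rw [measureReal_pi_forall_notMem _ hT, Fintype.card_fin, measureReal_restrict_apply hT,
    inter_eq_left.2 hT01]

theorem measureReal_lt_sub_purfA (hx : x < 1) (hs : s ∈ Ioo 0 x) :
    (Measure.pi fun _ : Fin k => 𝒰).real {ξs | s < x - purfA x ξs} = (1 - s) ^ k := by
  simp_rw [lt_sub_purfA_iff hs.2]
  rw [measureReal_pi_uniform_forall_notMem measurableSet_Icc
      (Icc_subset_Ico (by linarith [hs.2]) hx),
    Real.volume_real_Icc, sub_sub_cancel, max_eq_left hs.1.le]

theorem measureReal_lt_purfB_sub (hx : 0 ≤ x) (ht : t ∈ Ioo 0 (1 - x)) :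
    (Measure.pi fun _ : Fin k => 𝒰).real {ξs | t < purfB x ξs - x} = (1 - t) ^ k := by
  simp_rw [lt_purfB_sub_iff (by linarith [ht.2] : x + t < 1)]
  rw [measureReal_pi_uniform_forall_notMem measurableSet_Ioc
      (fun y hy => ⟨by linarith [hy.1], by linarith [hy.2, ht.2]⟩),
    Real.volume_real_Ioc, add_sub_cancel_left, max_eq_left ht.1.le]

theorem measureReal_lt_sub_purfA_and_lt_purfB_sub (hs : s ∈ Ioo 0 x)
    (ht : t ∈ Ioo 0 (1 - x)) :
    (Measure.pi fun _ : Fin k => 𝒰).real {ξs | s < x - purfA x ξs ∧ t < purfB x ξs - x}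
      = (1 - (s + t)) ^ k := by
  have hcell : ∀ ξs : Fin k → ℝ, (s < x - purfA x ξs ∧ t < purfB x ξs - x)
      ↔ ∀ i, ξs i ∉ Icc (x - s) (x + t) := fun ξs => by
    rw [lt_sub_purfA_iff hs.2, lt_purfB_sub_iff (by linarith [ht.2]), ← forall_and,
      ← Icc_union_Ioc_eq_Icc (by linarith [hs.1] : x - s ≤ x)
        (by linarith [ht.1] : x ≤ x + t)]
    simp only [mem_union, not_or]
  simp_rw [hcell]
  rw [measureReal_pi_uniform_forall_notMem measurableSet_Icc
      (Icc_subset_Ico (by linarith [hs.2]) (by linarith [ht.2])),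
    Real.volume_real_Icc, max_eq_left (by linarith [hs.1, ht.1]),
    show x + t - (x - s) = s + t by ring]

theorem integral_sub_purfA (hx : x ∈ Ioo 0 1) :
    ∫ ξs, (x - purfA x ξs) ∂(Measure.pi fun _ : Fin k => 𝒰)
      = (1 - (1 - x) ^ (k + 1)) / (k + 1) :=
  integral_eq_of_measureReal_lt_eq_one_sub_pow k hx.1.le
    measurable_sub_purfA (fun _ => (sub_purfA_mem_Icc hx.1.le).1)
    (fun _ => (sub_purfA_mem_Icc hx.1.le).2) fun _ hs => measureReal_lt_sub_purfA hx.2 hs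

theorem integral_purfB_sub (hx : x ∈ Ioo 0 1) :
    ∫ ξs, (purfB x ξs - x) ∂(Measure.pi fun _ : Fin k => 𝒰) = (1 - x ^ (k + 1)) / (k + 1) := by
  rw [integral_eq_of_measureReal_lt_eq_one_sub_pow k (sub_nonneg.2 hx.2.le)
    measurable_purfB_sub (fun _ => (purfB_sub_mem_Icc hx.2.le).1)
    (fun _ => (purfB_sub_mem_Icc hx.2.le).2) fun _ ht => measureReal_lt_purfB_sub hx.1.le ht,
    sub_sub_cancel]

theorem integral_sub_purfA_sq (hx : x ∈ Ioo 0 1) :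
    ∫ ξs, (x - purfA x ξs) ^ 2 ∂(Measure.pi fun _ : Fin k => 𝒰)
      = 2 * (1 - (1 - x) ^ (k + 1)) / (k + 1) - 2 * (1 - (1 - x) ^ (k + 2)) / (k + 2) :=
  integral_sq_eq_of_measureReal_lt_eq_one_sub_pow k hx.1.le
    measurable_sub_purfA (fun _ => (sub_purfA_mem_Icc hx.1.le).1)
    (fun _ => (sub_purfA_mem_Icc hx.1.le).2) fun _ hs => measureReal_lt_sub_purfA hx.2 hs

theorem integral_purfB_sub_sq (hx : x ∈ Ioo 0 1) :
    ∫ ξs, (purfB x ξs - x) ^ 2 ∂(Measure.pi fun _ : Fin k => 𝒰)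
      = 2 * (1 - x ^ (k + 1)) / (k + 1) - 2 * (1 - x ^ (k + 2)) / (k + 2) := by
  rw [integral_sq_eq_of_measureReal_lt_eq_one_sub_pow k (sub_nonneg.2 hx.2.le)
    measurable_purfB_sub (fun _ => (purfB_sub_mem_Icc hx.2.le).1)
    (fun _ => (purfB_sub_mem_Icc hx.2.le).2) fun _ ht => measureReal_lt_purfB_sub hx.1.le ht,
    sub_sub_cancel]

theorem integral_sub_purfA_mul_purfB_sub (hx : x ∈ Ioo 0 1) :
    ∫ ξs, (x - purfA x ξs) * (purfB x ξs - x) ∂(Measure.pi fun _ : Fin k => 𝒰)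
      = (1 - (x ^ (k + 2) + (1 - x) ^ (k + 2))) / ((k + 1) * (k + 2)) := by
  rw [integral_mul_eq_of_measureReal_lt (J := fun s t => (1 - (s + t)) ^ k) hx.1.le
      (sub_nonneg.2 hx.2.le) measurable_sub_purfA measurable_purfB_sub
      (fun _ => (sub_purfA_mem_Icc hx.1.le).1) (fun _ => (sub_purfA_mem_Icc hx.1.le).2)
      (fun _ => (purfB_sub_mem_Icc hx.2.le).1) (fun _ => (purfB_sub_mem_Icc hx.2.le).2)
      (by fun_prop)
      fun _ hs _ ht => measureReal_lt_sub_purfA_and_lt_purfB_sub hs ht,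
    integral_integral_one_sub_add_pow, sub_sub_cancel, sub_self, zero_pow (by omega)]
  ring

theorem integrable_sub_purfA_pow (hx : x ∈ Icc 0 1) (n : ℕ) :
    Integrable (fun ξs => (x - purfA x ξs) ^ n) (Measure.pi fun _ : Fin k => 𝒰) := by
  refine Integrable.of_mem_Icc 0 1 (measurable_sub_purfA.pow_const n).aemeasurable
    (ae_of_all _ fun ξs => ?_)
  obtain ⟨h0, h1⟩ := sub_purfA_mem_Icc (ξs := ξs) hx.1
  exact ⟨pow_nonneg h0 n, pow_le_one₀ h0 (h1.trans hx.2)⟩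

theorem integrable_purfB_sub_pow (hx : x ∈ Icc 0 1) (n : ℕ) :
    Integrable (fun ξs => (purfB x ξs - x) ^ n) (Measure.pi fun _ : Fin k => 𝒰) := by
  refine Integrable.of_mem_Icc 0 1 (measurable_purfB_sub.pow_const n).aemeasurable
    (ae_of_all _ fun ξs => ?_)
  obtain ⟨h0, h1⟩ := purfB_sub_mem_Icc (ξs := ξs) hx.2
  exact ⟨pow_nonneg h0 n, pow_le_one₀ h0 (h1.trans (sub_le_self 1 hx.1))⟩

end Purf

theorem purf_moments_general
    (k : ℕ) (x : ℝ) (hx : x ∈ Set.Ioo (0 : ℝ) 1) :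
    (∫ ξs : Fin k → ℝ, ((x - purfA x ξs) - (purfB x ξs - x))
        ∂(Measure.pi fun _ : Fin k => (volume : Measure ℝ).restrict (Set.Ico 0 1)))
      = (x ^ (k + 1) - (1 - x) ^ (k + 1)) / (k + 1)
    ∧ (∫ ξs : Fin k → ℝ, (x - purfA x ξs) * (purfB x ξs - x)
        ∂(Measure.pi fun _ : Fin k => (volume : Measure ℝ).restrict (Set.Ico 0 1)))
      = (1 - (x ^ (k + 2) + (1 - x) ^ (k + 2))) / ((k + 1) * (k + 2))
    ∧ (∫ ξs : Fin k → ℝ, ((x - purfA x ξs) ^ 2 + (purfB x ξs - x) ^ 2)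
        ∂(Measure.pi fun _ : Fin k => (volume : Measure ℝ).restrict (Set.Ico 0 1)))
      = 4 / ((k + 1 : ℝ) * (k + 2))
          - 2 * ((1 - x) * x ^ (k + 1) + x * (1 - x) ^ (k + 1)) / (k + 1)
          - 2 * (x ^ (k + 2) + (1 - x) ^ (k + 2)) / ((k + 1) * (k + 2)) := by
  have hx' : x ∈ Icc (0 : ℝ) 1 := Ioo_subset_Icc_self hx
  refine ⟨?_, integral_sub_purfA_mul_purfB_sub hx, ?_⟩
  · rw [integral_sub (by simpa using integrable_sub_purfA_pow hx' 1)
      (by simpa using integrable_purfB_sub_pow hx' 1), integral_sub_purfA hx,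
      integral_purfB_sub hx]
    ring
  · rw [integral_add (integrable_sub_purfA_pow hx' 2) (integrable_purfB_sub_pow hx' 2),
      integral_sub_purfA_sq hx, integral_purfB_sub_sq hx]
    field_simp
    ring

/-- **Moments of the cell of the PURF model.**
With `ξ₁,…,ξ_k` i.i.d. uniform on `[0,1)` (canonical product space), `α = x − A_{U,x}`,
`β = B_{U,x} − x` and `P_j(x) = x^j + (1−x)^j`:
`E[α−β] = (x^{k+1} − (1−x)^{k+1})/(k+1)`, `E[αβ] = (1 − P_{k+2}(x))/((k+1)(k+2))`, and
`E[α²+β²] = 4/((k+1)(k+2)) − 2((1−x)x^{k+1} + x(1−x)^{k+1})/(k+1)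
            − 2 P_{k+2}(x)/((k+1)(k+2))`. -/
theorem purf_moments
    (k : ℕ) (hk : 1 ≤ k) (x : ℝ) (hx : x ∈ Set.Ioo (0 : ℝ) 1) :
    (∫ ξs : Fin k → ℝ, ((x - purfA x ξs) - (purfB x ξs - x))
        ∂(Measure.pi fun _ : Fin k => (volume : Measure ℝ).restrict (Set.Ico 0 1)))
      = (x ^ (k + 1) - (1 - x) ^ (k + 1)) / (k + 1)
    ∧ (∫ ξs : Fin k → ℝ, (x - purfA x ξs) * (purfB x ξs - x)
        ∂(Measure.pi fun _ : Fin k => (volume : Measure ℝ).restrict (Set.Ico 0 1)))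
      = (1 - (x ^ (k + 2) + (1 - x) ^ (k + 2))) / ((k + 1) * (k + 2))
    ∧ (∫ ξs : Fin k → ℝ, ((x - purfA x ξs) ^ 2 + (purfB x ξs - x) ^ 2)
        ∂(Measure.pi fun _ : Fin k => (volume : Measure ℝ).restrict (Set.Ico 0 1)))
      = 4 / ((k + 1 : ℝ) * (k + 2))
          - 2 * ((1 - x) * x ^ (k + 1) + x * (1 - x) ^ (k + 1)) / (k + 1)
          - 2 * (x ^ (k + 2) + (1 - x) ^ (k + 2)) / ((k + 1) * (k + 2)) :=
  purf_moments_general k x hx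
end

section
/- In the BPRF coordinate chain, for every p ∈ ℕ and every coordinate i ∈ {1,…,d}: (i) for every natural number δ, E[(α_i^{(p)} β_i^{(p)})^δ] = (1 − δ/(d(δ+1)))^p (x_i(1−x_i))^δ; (ii) E[α_i^{(p)} − β_i^{(p)}] = (1 − 1/(2d))^p (2x_i − 1); (iii) E[(α_i^{(p)})² + (β_i^{(p)})²] = 4x_i(1−x_i)(1 − 1/(2d))^p + (x_i² + (1−x_i)² − 4x_i(1−x_i))(1 − 2/(3d))^p. -/
open MeasureTheory ProbabilityTheory

/-- The BPRF coordinate chain: `bprfChain J U W x i p ω` is the pair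
`(α_i^{(p)}, β_i^{(p)})` of distances from `x` to the two faces, in direction `i`,
of the cell containing `x` in the depth-`p` balanced purely random forest tree.
(The variables `J p`, `U p`, `W p` drive the step from depth `p` to depth `p+1`.) -/
noncomputable def bprfChain {Ω : Type*} {d : ℕ} (J : ℕ → Ω → Fin d) (U W : ℕ → Ω → ℝ)
    (x : Fin d → ℝ) (i : Fin d) : ℕ → Ω → ℝ × ℝ
  | 0 => fun _ => (x i, 1 - x i)
  | p + 1 => fun ω =>
      let ab := bprfChain J U W x i p ω
      if J p ω = i then
        if W p ω * (ab.1 + ab.2) ≤ ab.1 then (U p ω * ab.1, ab.2)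
        else (ab.1, U p ω * ab.2)
      else ab

/-!
The pair `X = (α, β)` is a Markov chain on `[0,1]²` with an explicit transition operator `P`
(`bprfStepMean`): with probability `1 - 1/d` the pair does not move; otherwise it becomes
`(Uα, β)` with probability `α/(α+β)` and `(α, Uβ)` else, for a fresh uniform `U`. A direct
computation shows that `(αβ)^δ` and `α - β` are eigenfunctions of `P`, with eigenvalues
`1 - δ/(d(δ+1))` and `1 - 1/(2d)`, while `P(α² + β²) = (1 - 2/(3d))(α² + β²) + (2/(3d)) αβ`.
The state at depth `p` is a function of the first `p` innovations `(J, U, W)`, hence independent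
of the next one, so `E[g(X_{p+1})] = E[(Pg)(X_p)]`. Iterating gives (i) and (ii); (iii) is the
resulting linear recurrence, driven by (i) with `δ = 1`.
-/

open Set
open scoped ENNReal

namespace ProbabilityTheory

variable {Ω β S : Type*} [MeasurableSpace β] [MeasurableSpace S]

theorem IndepFun.integral_comp_eq_integral_integral_map [MeasurableSpace Ω] {P : Measure Ω}
    [IsFiniteMeasure P]
    {X : Ω → S} {Y : Ω → β} (hXY : IndepFun X Y P) (hX : Measurable X) (hY : Measurable Y)
    {F : S × β → ℝ} (hF : Measurable F) (hFi : Integrable F ((P.map X).prod (P.map Y))) :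
    ∫ ω, F (X ω, Y ω) ∂P = ∫ ω, ∫ y, F (X ω, y) ∂(P.map Y) ∂P := by
  have hmap : P.map (fun ω => (X ω, Y ω)) = (P.map X).prod (P.map Y) :=
    (indepFun_iff_map_prod_eq_prod_map_map hX.aemeasurable hY.aemeasurable).1 hXY
  calc ∫ ω, F (X ω, Y ω) ∂P = ∫ z, F z ∂(P.map fun ω => (X ω, Y ω)) :=
        (integral_map (hX.prodMk hY).aemeasurable hF.aestronglyMeasurable).symm
    _ = ∫ s, ∫ y, F (s, y) ∂(P.map Y) ∂(P.map X) := by rw [hmap, integral_prod F hFi]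
    _ = ∫ ω, ∫ y, F (X ω, y) ∂(P.map Y) ∂P :=
        integral_map hX.aemeasurable hF.stronglyMeasurable.integral_prod_right'.aestronglyMeasurable

theorem measurable_iSup_comap_of_recursion {Y : ℕ → Ω → β} {F : S × β → S} (hF : Measurable F)
    {X : ℕ → Ω → S} (s₀ : S) (h0 : ∀ ω, X 0 ω = s₀)
    (hX : ∀ p ω, X (p + 1) ω = F (X p ω, Y p ω)) (p : ℕ) :
    Measurable[⨆ k ∈ Iio p, MeasurableSpace.comap (Y k) ‹_›] (X p) := by
  induction p with
  | zero => simpa only [funext h0] using measurable_const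
  | succ p ih =>
    have hpast : (⨆ k ∈ Iio p, MeasurableSpace.comap (Y k) ‹_›)
        ≤ ⨆ k ∈ Iio (p + 1), MeasurableSpace.comap (Y k) ‹_› :=
      biSup_mono fun k hk => lt_trans hk p.lt_succ_self
    have hnow : MeasurableSpace.comap (Y p) ‹_›
        ≤ ⨆ k ∈ Iio (p + 1), MeasurableSpace.comap (Y k) ‹_› :=
      le_iSup₂ (f := fun k (_ : k ∈ Iio (p + 1)) => MeasurableSpace.comap (Y k) ‹_›) p
        p.lt_succ_self
    rw [funext (hX p)]
    exact hF.comp ((ih.mono hpast le_rfl).prodMk ((comap_measurable (Y p)).mono hnow le_rfl))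

theorem iIndepFun.indepFun_of_recursion [MeasurableSpace Ω] {P : Measure Ω} {Y : ℕ → Ω → β}
    (hY : iIndepFun Y P) (hYm : ∀ k, Measurable (Y k)) {F : S × β → S} (hF : Measurable F)
    {X : ℕ → Ω → S} (s₀ : S) (h0 : ∀ ω, X 0 ω = s₀)
    (hX : ∀ p ω, X (p + 1) ω = F (X p ω, Y p ω)) (p : ℕ) :
    IndepFun (X p) (Y p) P := by
  have hpast_now := indep_iSup_of_disjoint (fun k => (hYm k).comap_le) hY.iIndep
    (S := Iio p) (T := {p}) (by simp)
  rw [IndepFun_iff_Indep]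
  refine indep_of_indep_of_le_right (indep_of_indep_of_le_left hpast_now ?_) ?_
  · exact (measurable_iSup_comap_of_recursion hF s₀ h0 hX p).comap_le
  · simp

end ProbabilityTheory

theorem integrable_comp_of_ae_mem {α E : Type*} [MeasurableSpace α] {μ : Measure α}
    [IsFiniteMeasure μ] [TopologicalSpace E] [MeasurableSpace E] [OpensMeasurableSpace E]
    {K : Set E} (hK : IsCompact K) {g : E → ℝ} (hg : Continuous g) {f : α → E}
    (hf : Measurable f) (hfK : ∀ᵐ a ∂μ, f a ∈ K) :
    Integrable (fun a => g (f a)) μ := by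
  obtain ⟨C, hC⟩ := hK.exists_bound_of_continuousOn hg.continuousOn
  exact .of_bound (hg.measurable.comp hf).aestronglyMeasurable C
    (hfK.mono fun a ha => hC _ ha)

noncomputable def bprfStep {d : ℕ} (i : Fin d) (s : ℝ × ℝ) (y : Fin d × ℝ × ℝ) : ℝ × ℝ :=
  if y.1 = i then
    if y.2.2 * (s.1 + s.2) ≤ s.1 then (y.2.1 * s.1, s.2) else (s.1, y.2.1 * s.2)
  else s

theorem bprfChain_succ {Ω : Type*} {d : ℕ} (J : ℕ → Ω → Fin d) (U W : ℕ → Ω → ℝ)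
    (x : Fin d → ℝ) (i : Fin d) (p : ℕ) (ω : Ω) :
    bprfChain J U W x i (p + 1) ω
      = bprfStep i (bprfChain J U W x i p ω) (J p ω, U p ω, W p ω) := rfl

theorem measurable_bprfStep {d : ℕ} (i : Fin d) :
    Measurable fun z : (ℝ × ℝ) × (Fin d × ℝ × ℝ) => bprfStep i z.1 z.2 := by
  refine Measurable.ite (measurable_snd.fst (measurableSet_singleton i)) ?_ measurable_fst
  exact Measurable.ite (measurableSet_le (by fun_prop) (by fun_prop)) (by fun_prop) (by fun_prop)

theorem bprfStep_mem_Icc {d : ℕ} (i : Fin d) {s : ℝ × ℝ} {y : Fin d × ℝ × ℝ} (hs : 0 ≤ s)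
    (hu : y.2.1 ∈ Icc (0 : ℝ) 1) : bprfStep i s y ∈ Icc 0 s := by
  obtain ⟨ha, hb⟩ : 0 ≤ s.1 ∧ 0 ≤ s.2 := hs
  obtain ⟨hu0, hu1⟩ := hu
  unfold bprfStep
  split_ifs <;> simp only [mem_Icc, Prod.le_def, Prod.fst_zero, Prod.snd_zero] <;>
    refine ⟨⟨?_, ?_⟩, ?_, ?_⟩ <;> nlinarith

noncomputable abbrev uniform01 : Measure ℝ := volume.restrict (Icc 0 1)

instance : IsProbabilityMeasure uniform01 := ⟨by simp⟩

instance {d : ℕ} [NeZero d] :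
    IsProbabilityMeasure ((d : ℝ≥0∞)⁻¹ • (Measure.count : Measure (Fin d))) :=
  ⟨by simp [ENNReal.inv_mul_cancel (NeZero.ne (d : ℝ≥0∞))]⟩

noncomputable abbrev bprfStepLaw (d : ℕ) : Measure (Fin d × ℝ × ℝ) :=
  ((d : ℝ≥0∞)⁻¹ • (Measure.count : Measure (Fin d))).prod (uniform01.prod uniform01)

theorem ae_bprfStepLaw_mem_Icc (d : ℕ) : ∀ᵐ y ∂bprfStepLaw d, y.2.1 ∈ Icc (0 : ℝ) 1 :=
  Measure.quasiMeasurePreserving_snd.ae <|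
    Measure.quasiMeasurePreserving_fst.ae <| ae_restrict_mem measurableSet_Icc

theorem integral_uniform01 (f : ℝ → ℝ) : ∫ u, f u ∂uniform01 = ∫ u in (0 : ℝ)..1, f u := by
  rw [intervalIntegral.integral_of_le zero_le_one, integral_Icc_eq_integral_Ioc]

noncomputable def bprfStepMean (d : ℕ) (i : Fin d) (g : ℝ × ℝ → ℝ) (s : ℝ × ℝ) : ℝ :=
  ∫ y, g (bprfStep i s y) ∂bprfStepLaw d

theorem integral_ite_le_uniform01 {φ ψ : ℝ → ℝ} (hφ : Continuous φ) (hψ : Continuous ψ)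
    {t : ℝ} (ht : t ∈ Icc (0 : ℝ) 1) :
    ∫ z, (if z.2 ≤ t then φ z.1 else ψ z.1) ∂(uniform01.prod uniform01)
      = t * (∫ u in (0 : ℝ)..1, φ u) + (1 - t) * ∫ u in (0 : ℝ)..1, ψ u := by
  have hIic : uniform01.real (Iic t) = t := by
    have hinter : Iic t ∩ Icc 0 1 = Icc 0 t :=
      Set.ext fun u => ⟨fun h => ⟨h.2.1, h.1⟩, fun h => ⟨h.2, h.1, h.2.trans ht.2⟩⟩
    rw [measureReal_restrict_apply measurableSet_Iic, hinter, Real.volume_real_Icc_of_le ht.1,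
      sub_zero]
  have hsplit : (fun z : ℝ × ℝ => if z.2 ≤ t then φ z.1 else ψ z.1) = fun z =>
      φ z.1 * (Iic t).indicator 1 z.2 + ψ z.1 * (Iic t)ᶜ.indicator 1 z.2 := by
    ext z
    by_cases hz : z.2 ≤ t <;> simp [indicator_apply, hz]
  have hIic_int : Integrable ((Iic t).indicator (1 : ℝ → ℝ)) uniform01 :=
    (integrable_const 1).indicator measurableSet_Iic
  have hIoi_int : Integrable ((Iic t)ᶜ.indicator (1 : ℝ → ℝ)) uniform01 :=
    (integrable_const 1).indicator measurableSet_Iic.compl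
  rw [hsplit, integral_add (hφ.integrableOn_Icc.mul_prod hIic_int)
      (hψ.integrableOn_Icc.mul_prod hIoi_int),
    integral_prod_mul, integral_prod_mul, integral_indicator_one measurableSet_Iic,
    integral_indicator_one measurableSet_Iic.compl, probReal_compl_eq_one_sub measurableSet_Iic,
    hIic, integral_uniform01, integral_uniform01]
  ring

/-- At `a = b = 0` the junk weight `0 / (0 + 0) = 0` is harmless: both integrals are `g (0, 0)`. -/
theorem bprfStepMean_eq {d : ℕ} [NeZero d] (i : Fin d) {g : ℝ × ℝ → ℝ} (hg : Continuous g)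
    {a b : ℝ} (ha : 0 ≤ a) (hb : 0 ≤ b) :
    bprfStepMean d i g (a, b) = (1 - 1 / d) * g (a, b) + 1 / d *
      (a / (a + b) * (∫ u in (0 : ℝ)..1, g (u * a, b))
        + (1 - a / (a + b)) * ∫ u in (0 : ℝ)..1, g (a, u * b)) := by
  have hcut : ∫ z, g (bprfStep i (a, b) (i, z)) ∂(uniform01.prod uniform01)
      = a / (a + b) * (∫ u in (0 : ℝ)..1, g (u * a, b))
        + (1 - a / (a + b)) * ∫ u in (0 : ℝ)..1, g (a, u * b) := by
    rcases (add_nonneg ha hb).eq_or_lt with hab | hab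
    · obtain rfl : a = 0 := by linarith
      obtain rfl : b = 0 := by linarith
      simp [bprfStep]
    · have hle (w : ℝ) : w * (a + b) ≤ a ↔ w ≤ a / (a + b) := (le_div_iff₀ hab).symm
      simp only [bprfStep, if_true, apply_ite g, hle]
      exact integral_ite_le_uniform01 (φ := fun u => g (u * a, b)) (ψ := fun u => g (a, u * b))
        (by fun_prop) (by fun_prop)
        ⟨div_nonneg ha hab.le, div_le_one_of_le₀ (le_add_of_nonneg_right hb) hab.le⟩
  have hother (j : Fin d) (hj : j ≠ i) :
      ∫ z, g (bprfStep i (a, b) (j, z)) ∂(uniform01.prod uniform01) = g (a, b) := by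
    simp [bprfStep, hj]
  have hint : Integrable (fun y => g (bprfStep i (a, b) y)) (bprfStepLaw d) :=
    integrable_comp_of_ae_mem isCompact_Icc hg
      ((measurable_bprfStep i).comp measurable_prodMk_left)
      ((ae_bprfStepLaw_mem_Icc d).mono fun y hy => bprfStep_mem_Icc i ⟨ha, hb⟩ hy)
  rw [bprfStepMean, integral_prod _ hint, integral_smul_measure,
    integral_fintype .of_finite, ← Finset.add_sum_erase _ _ (Finset.mem_univ i),
    Finset.sum_congr rfl fun j hj => by rw [hother j (Finset.ne_of_mem_erase hj)], hcut]
  have hd : (d : ℝ) ≠ 0 := Nat.cast_ne_zero.2 (NeZero.ne d)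
  simp [Finset.card_erase_of_mem, Nat.cast_pred (Nat.pos_of_neZero d)]
  field_simp
  ring

theorem bprfStepMean_mul_pow {d : ℕ} [NeZero d] (i : Fin d) (δ : ℕ) {s : ℝ × ℝ} (hs : 0 ≤ s) :
    bprfStepMean d i (fun s => (s.1 * s.2) ^ δ) s = (1 - δ / (d * (δ + 1))) * (s.1 * s.2) ^ δ := by
  obtain ⟨a, b⟩ := s
  obtain ⟨ha, hb⟩ : 0 ≤ a ∧ 0 ≤ b := hs
  have hleft : ∫ u in (0 : ℝ)..1, (u * a * b) ^ δ = (a * b) ^ δ / (δ + 1) := by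
    simp [mul_pow]
    ring
  have hright : ∫ u in (0 : ℝ)..1, (a * (u * b)) ^ δ = (a * b) ^ δ / (δ + 1) := by
    simp [mul_pow]
    ring
  rw [bprfStepMean_eq i (by fun_prop) ha hb]
  dsimp only
  rw [hleft, hright]
  field_simp
  ring

theorem bprfStepMean_sub {d : ℕ} [NeZero d] (i : Fin d) {s : ℝ × ℝ} (hs : 0 ≤ s) :
    bprfStepMean d i (fun s => s.1 - s.2) s = (1 - 1 / (2 * d)) * (s.1 - s.2) := by
  obtain ⟨a, b⟩ := s
  obtain ⟨ha, hb⟩ : 0 ≤ a ∧ 0 ≤ b := hs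
  have hleft : ∫ u in (0 : ℝ)..1, (u * a - b) = a / 2 - b := by
    simp
    ring
  have hright : ∫ u in (0 : ℝ)..1, (a - u * b) = a - b / 2 := by
    simp
    ring
  have hweight : a / (a + b) * (a + b) = a := div_mul_cancel_of_imp fun h => by linarith
  rw [bprfStepMean_eq i (by fun_prop) ha hb]
  dsimp only
  rw [hleft, hright]
  linear_combination (-1 / (2 * d)) * hweight

theorem bprfStepMean_sq_add_sq {d : ℕ} [NeZero d] (i : Fin d) {s : ℝ × ℝ} (hs : 0 ≤ s) :
    bprfStepMean d i (fun s => s.1 ^ 2 + s.2 ^ 2) s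
      = (1 - 2 / (3 * d)) * (s.1 ^ 2 + s.2 ^ 2) + 2 / (3 * d) * (s.1 * s.2) := by
  obtain ⟨a, b⟩ := s
  obtain ⟨ha, hb⟩ : 0 ≤ a ∧ 0 ≤ b := hs
  have hleft : ∫ u in (0 : ℝ)..1, ((u * a) ^ 2 + b ^ 2) = a ^ 2 / 3 + b ^ 2 := by
    simp [mul_pow]
    ring
  have hright : ∫ u in (0 : ℝ)..1, (a ^ 2 + (u * b) ^ 2) = a ^ 2 + b ^ 2 / 3 := by
    simp [mul_pow]
    ring
  have hweight : a / (a + b) * (a + b) = a := div_mul_cancel_of_imp fun h => by linarith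
  rw [bprfStepMean_eq i (by fun_prop) ha hb]
  dsimp only
  rw [hleft, hright]
  linear_combination (-2 / (3 * d) * (a - b)) * hweight

section Chain

variable {Ω : Type*} [MeasurableSpace Ω] {P : Measure Ω} {d : ℕ}
  {J : ℕ → Ω → Fin d} {U W : ℕ → Ω → ℝ} {x : Fin d → ℝ} {i : Fin d}

theorem measurable_bprfChain (hY : ∀ p, Measurable fun ω => (J p ω, U p ω, W p ω)) (p : ℕ) :
    Measurable (bprfChain J U W x i p) := by
  induction p with
  | zero => exact measurable_const
  | succ p ih => exact (measurable_bprfStep i).comp (ih.prodMk (hY p))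

theorem ae_bprfChain_mem_Icc (hx : x i ∈ Icc 0 1)
    (hY : ∀ p, Measurable fun ω => (J p ω, U p ω, W p ω))
    (h_dist : ∀ p, P.map (fun ω => (J p ω, U p ω, W p ω)) = bprfStepLaw d) (p : ℕ) :
    ∀ᵐ ω ∂P, bprfChain J U W x i p ω ∈ Icc 0 1 := by
  induction p with
  | zero => exact .of_forall fun _ => ⟨⟨hx.1, sub_nonneg.2 hx.2⟩, ⟨hx.2, sub_le_self 1 hx.1⟩⟩
  | succ p ih =>
    have hU : ∀ᵐ ω ∂P, U p ω ∈ Icc (0 : ℝ) 1 :=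
      ae_of_ae_map (hY p).aemeasurable (p := fun y => y.2.1 ∈ Icc (0 : ℝ) 1)
        (h_dist p ▸ ae_bprfStepLaw_mem_Icc d)
    filter_upwards [ih, hU] with ω hω hUω
    exact Icc_subset_Icc_right hω.2 (bprfStep_mem_Icc i hω.1 (y := (J p ω, U p ω, W p ω)) hUω)

theorem integral_comp_bprfChain_succ [IsFiniteMeasure P] (hx : x i ∈ Icc 0 1)
    (hY : ∀ p, Measurable fun ω => (J p ω, U p ω, W p ω))
    (h_indep : iIndepFun (fun p ω => (J p ω, U p ω, W p ω)) P)
    (h_dist : ∀ p, P.map (fun ω => (J p ω, U p ω, W p ω)) = bprfStepLaw d)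
    {g : ℝ × ℝ → ℝ} (hg : Continuous g) (p : ℕ) :
    ∫ ω, g (bprfChain J U W x i (p + 1) ω) ∂P
      = ∫ ω, bprfStepMean d i g (bprfChain J U W x i p ω) ∂P := by
  have hX := measurable_bprfChain (x := x) (i := i) hY p
  have hXY : IndepFun (bprfChain J U W x i p) (fun ω => (J p ω, U p ω, W p ω)) P :=
    h_indep.indepFun_of_recursion hY (measurable_bprfStep i) _ (fun _ => rfl) (fun _ _ => rfl) p
  have hX_mem : ∀ᵐ s ∂P.map (bprfChain J U W x i p), s ∈ Icc 0 1 :=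
    (ae_map_iff hX.aemeasurable measurableSet_Icc).2 (ae_bprfChain_mem_Icc hx hY h_dist p)
  have hU_mem : ∀ᵐ y ∂P.map (fun ω => (J p ω, U p ω, W p ω)), y.2.1 ∈ Icc (0 : ℝ) 1 :=
    h_dist p ▸ ae_bprfStepLaw_mem_Icc d
  have hint : Integrable (fun z => g (bprfStep i z.1 z.2))
      ((P.map (bprfChain J U W x i p)).prod (P.map fun ω => (J p ω, U p ω, W p ω))) := by
    refine integrable_comp_of_ae_mem (isCompact_Icc (a := 0) (b := 1)) hg
      (measurable_bprfStep i) ?_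
    filter_upwards [Measure.quasiMeasurePreserving_fst.ae hX_mem,
      Measure.quasiMeasurePreserving_snd.ae hU_mem] with z hz hu
    exact Icc_subset_Icc_right hz.2 (bprfStep_mem_Icc i hz.1 hu)
  have key := hXY.integral_comp_eq_integral_integral_map hX (hY p)
    (hg.measurable.comp (measurable_bprfStep i)) hint
  rwa [h_dist p] at key

theorem integral_comp_bprfChain_succ_of_bprfStepMean_eq [IsFiniteMeasure P]
    (hx : x i ∈ Icc 0 1)
    (hY : ∀ p, Measurable fun ω => (J p ω, U p ω, W p ω))
    (h_indep : iIndepFun (fun p ω => (J p ω, U p ω, W p ω)) P)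
    (h_dist : ∀ p, P.map (fun ω => (J p ω, U p ω, W p ω)) = bprfStepLaw d)
    {g h : ℝ × ℝ → ℝ} (hg : Continuous g) (hh : Continuous h) {c : ℝ}
    (hgh : ∀ s ∈ Icc (0 : ℝ × ℝ) 1, bprfStepMean d i g s = c * g s + h s) (p : ℕ) :
    ∫ ω, g (bprfChain J U W x i (p + 1) ω) ∂P
      = c * ∫ ω, g (bprfChain J U W x i p ω) ∂P + ∫ ω, h (bprfChain J U W x i p ω) ∂P := by
  have hmem := ae_bprfChain_mem_Icc hx hY h_dist p
  have hX := measurable_bprfChain (x := x) (i := i) hY p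
  rw [integral_comp_bprfChain_succ hx hY h_indep h_dist hg,
    integral_congr_ae (hmem.mono fun ω hω => hgh _ hω),
    integral_add ((integrable_comp_of_ae_mem isCompact_Icc hg hX hmem).const_mul c)
      (integrable_comp_of_ae_mem isCompact_Icc hh hX hmem),
    integral_const_mul]

theorem integral_comp_bprfChain_of_bprfStepMean_eq_mul [IsProbabilityMeasure P]
    (hx : x i ∈ Icc 0 1)
    (hY : ∀ p, Measurable fun ω => (J p ω, U p ω, W p ω))
    (h_indep : iIndepFun (fun p ω => (J p ω, U p ω, W p ω)) P)
    (h_dist : ∀ p, P.map (fun ω => (J p ω, U p ω, W p ω)) = bprfStepLaw d)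
    {g : ℝ × ℝ → ℝ} (hg : Continuous g) {c : ℝ}
    (hgc : ∀ s ∈ Icc (0 : ℝ × ℝ) 1, bprfStepMean d i g s = c * g s) (p : ℕ) :
    ∫ ω, g (bprfChain J U W x i p ω) ∂P = c ^ p * g (x i, 1 - x i) := by
  induction p with
  | zero => simp [bprfChain]
  | succ p ih =>
    rw [integral_comp_bprfChain_succ_of_bprfStepMean_eq hx hY h_indep h_dist hg
      continuous_const (h := fun _ => 0) (by simpa using hgc), ih, integral_zero]
    ring

variable [IsProbabilityMeasure P] [NeZero d]

theorem integral_mul_pow_bprfChain (hx : x i ∈ Icc 0 1)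
    (hY : ∀ p, Measurable fun ω => (J p ω, U p ω, W p ω))
    (h_indep : iIndepFun (fun p ω => (J p ω, U p ω, W p ω)) P)
    (h_dist : ∀ p, P.map (fun ω => (J p ω, U p ω, W p ω)) = bprfStepLaw d) (δ p : ℕ) :
    ∫ ω, ((bprfChain J U W x i p ω).1 * (bprfChain J U W x i p ω).2) ^ δ ∂P
      = (1 - (δ : ℝ) / (d * (δ + 1))) ^ p * (x i * (1 - x i)) ^ δ :=
  integral_comp_bprfChain_of_bprfStepMean_eq_mul hx hY h_indep h_dist
    (g := fun s => (s.1 * s.2) ^ δ) (by fun_prop) (fun _ hs => bprfStepMean_mul_pow i δ hs.1) p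

theorem integral_sub_bprfChain (hx : x i ∈ Icc 0 1)
    (hY : ∀ p, Measurable fun ω => (J p ω, U p ω, W p ω))
    (h_indep : iIndepFun (fun p ω => (J p ω, U p ω, W p ω)) P)
    (h_dist : ∀ p, P.map (fun ω => (J p ω, U p ω, W p ω)) = bprfStepLaw d) (p : ℕ) :
    ∫ ω, ((bprfChain J U W x i p ω).1 - (bprfChain J U W x i p ω).2) ∂P
      = (1 - 1 / (2 * (d : ℝ))) ^ p * (2 * x i - 1) := by
  rw [integral_comp_bprfChain_of_bprfStepMean_eq_mul hx hY h_indep h_dist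
    (g := fun s => s.1 - s.2) (by fun_prop) (fun _ hs => bprfStepMean_sub i hs.1) p]
  ring

theorem integral_sq_add_sq_bprfChain (hx : x i ∈ Icc 0 1)
    (hY : ∀ p, Measurable fun ω => (J p ω, U p ω, W p ω))
    (h_indep : iIndepFun (fun p ω => (J p ω, U p ω, W p ω)) P)
    (h_dist : ∀ p, P.map (fun ω => (J p ω, U p ω, W p ω)) = bprfStepLaw d) (p : ℕ) :
    ∫ ω, ((bprfChain J U W x i p ω).1 ^ 2 + (bprfChain J U W x i p ω).2 ^ 2) ∂P
      = 4 * x i * (1 - x i) * (1 - 1 / (2 * (d : ℝ))) ^ p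
        + (x i ^ 2 + (1 - x i) ^ 2 - 4 * x i * (1 - x i)) * (1 - 2 / (3 * (d : ℝ))) ^ p := by
  induction p with
  | zero => simp [bprfChain]
  | succ p ih =>
    have hprod := integral_mul_pow_bprfChain hx hY h_indep h_dist 1 p
    simp only [pow_one, Nat.cast_one] at hprod
    rw [integral_comp_bprfChain_succ_of_bprfStepMean_eq hx hY h_indep h_dist (by fun_prop)
      (h := fun s => 2 / (3 * d) * (s.1 * s.2)) (by fun_prop)
      (fun _ hs => bprfStepMean_sq_add_sq i hs.1), ih, integral_const_mul, hprod]
    ring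

end Chain

theorem bprf_chain_moments_general
    {Ω : Type*} [MeasureSpace Ω] [IsProbabilityMeasure (ℙ : Measure Ω)]
    (d : ℕ)
    (x : Fin d → ℝ) (hx : ∀ i, x i ∈ Set.Ico (0 : ℝ) 1)
    (J : ℕ → Ω → Fin d) (U W : ℕ → Ω → ℝ)
    (hJ : ∀ p, Measurable (J p)) (hU : ∀ p, Measurable (U p)) (hW : ∀ p, Measurable (W p))
    (h_indep : iIndepFun
        (fun p ω => (J p ω, U p ω, W p ω)) ℙ)
    (h_dist : ∀ p, Measure.map (fun ω => (J p ω, U p ω, W p ω)) ℙ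
        = (((d : ENNReal)⁻¹ • (Measure.count : Measure (Fin d))).prod
            ((((volume : Measure ℝ).restrict (Set.Icc 0 1))).prod
              ((volume : Measure ℝ).restrict (Set.Icc 0 1))))) :
    ∀ p : ℕ, ∀ i : Fin d,
      (∀ δ : ℕ,
        (∫ ω : Ω, ((bprfChain J U W x i p ω).1 * (bprfChain J U W x i p ω).2) ^ δ)
          = (1 - (δ : ℝ) / (d * (δ + 1))) ^ p * (x i * (1 - x i)) ^ δ)
      ∧ (∫ ω : Ω, ((bprfChain J U W x i p ω).1 - (bprfChain J U W x i p ω).2))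
          = (1 - 1 / (2 * (d : ℝ))) ^ p * (2 * x i - 1)
      ∧ (∫ ω : Ω, ((bprfChain J U W x i p ω).1 ^ 2 + (bprfChain J U W x i p ω).2 ^ 2))
          = 4 * x i * (1 - x i) * (1 - 1 / (2 * (d : ℝ))) ^ p
            + (x i ^ 2 + (1 - x i) ^ 2 - 4 * x i * (1 - x i))
                * (1 - 2 / (3 * (d : ℝ))) ^ p := by
  intro p i
  have : NeZero d := NeZero.of_pos i.pos
  have hxi : x i ∈ Icc 0 1 := Ico_subset_Icc_self (hx i)
  have hY (p : ℕ) : Measurable fun ω => (J p ω, U p ω, W p ω) :=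
    (hJ p).prodMk ((hU p).prodMk (hW p))
  exact ⟨fun δ => integral_mul_pow_bprfChain hxi hY h_indep h_dist δ p,
    integral_sub_bprfChain hxi hY h_indep h_dist p,
    integral_sq_add_sq_bprfChain hxi hY h_indep h_dist p⟩

/-- **One-dimensional moments of the BPRF coordinate chain (Proposition 14 of the paper).**
With `(J_p)`, `(U_p)`, `(W_p)` independent, `J_p` uniform on `{1,…,d}` and `U_p`, `W_p`
uniform on `[0,1]`, for every depth `p` and coordinate `i`:
(i) `E[(α_i^{(p)} β_i^{(p)})^δ] = (1 − δ/(d(δ+1)))^p (x_i(1−x_i))^δ` for every `δ : ℕ`;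
(ii) `E[α_i^{(p)} − β_i^{(p)}] = (1 − 1/(2d))^p (2x_i − 1)`;
(iii) `E[(α_i^{(p)})² + (β_i^{(p)})²] = 4x_i(1−x_i)(1 − 1/(2d))^p
       + (x_i² + (1−x_i)² − 4x_i(1−x_i))(1 − 2/(3d))^p`. -/
theorem bprf_chain_moments
    {Ω : Type*} [MeasureSpace Ω] [IsProbabilityMeasure (ℙ : Measure Ω)]
    (d : ℕ) (hd : 1 ≤ d)
    (x : Fin d → ℝ) (hx : ∀ i, x i ∈ Set.Ico (0 : ℝ) 1)
    (J : ℕ → Ω → Fin d) (U W : ℕ → Ω → ℝ)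
    (hJ : ∀ p, Measurable (J p)) (hU : ∀ p, Measurable (U p)) (hW : ∀ p, Measurable (W p))
    (h_indep : iIndepFun
        (fun p ω => (J p ω, U p ω, W p ω)) ℙ)
    (h_dist : ∀ p, Measure.map (fun ω => (J p ω, U p ω, W p ω)) ℙ
        = (((d : ENNReal)⁻¹ • (Measure.count : Measure (Fin d))).prod
            ((((volume : Measure ℝ).restrict (Set.Icc 0 1))).prod
              ((volume : Measure ℝ).restrict (Set.Icc 0 1))))) :
    ∀ p : ℕ, ∀ i : Fin d,
      (∀ δ : ℕ,
        (∫ ω : Ω, ((bprfChain J U W x i p ω).1 * (bprfChain J U W x i p ω).2) ^ δ)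
          = (1 - (δ : ℝ) / (d * (δ + 1))) ^ p * (x i * (1 - x i)) ^ δ)
      ∧ (∫ ω : Ω, ((bprfChain J U W x i p ω).1 - (bprfChain J U W x i p ω).2))
          = (1 - 1 / (2 * (d : ℝ))) ^ p * (2 * x i - 1)
      ∧ (∫ ω : Ω, ((bprfChain J U W x i p ω).1 ^ 2 + (bprfChain J U W x i p ω).2 ^ 2))
          = 4 * x i * (1 - x i) * (1 - 1 / (2 * (d : ℝ))) ^ p
            + (x i ^ 2 + (1 - x i) ^ 2 - 4 * x i * (1 - x i))
                * (1 - 2 / (3 * (d : ℝ))) ^ p :=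
  bprf_chain_moments_general d x hx J U W hJ hU hW h_indep h_dist
end

section
/- Let p ≥ 1 be an integer, Z₁, …, Z_p be i.i.d. random variables uniformly distributed on [0,1], and V_p = Z₁ Z₂ ⋯ Z_p. Then: (i) for every u > 0, P(V_p ≤ exp(−p − √(up))) ≤ 1/u; (ii) for every n ≥ 1 and every u > 0, E[exp(−n V_p)] ≤ 1/u + (1 − 1/u) exp(−n exp(−(p + √(up)))); and (iii) if n ≥ exp(p + √(5p)), then E[exp(−n V_p)] ≤ (1 + 4e^{−1})/5 < 1/2. -/
/-!
Under the uniform law, `-log Z` is exponentially distributed: the substitution `x = exp (-t)`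
turns its moments into Gamma integrals, so it has mean `1` and variance `1`. Hence
`-log V_p = ∑ -log Zᵢ` has mean `p` and variance `p`, and `V_p ≤ exp (-p - t)` says that this sum
exceeds its mean by at least `t`; Chebyshev's inequality with `t = √(u p)` gives (i). For (ii),
split `E[exp (-n V_p)]` along that event: the integrand is at most `1` on it and at most
`exp (-n exp (-p - √(u p)))` off it. Part (iii) is (ii) with `u = 5`.
-/

open MeasureTheory Real ProbabilityTheory Set
open scoped Nat

lemma image_exp_neg_Ioi_zero : (fun t : ℝ => exp (-t)) '' Ioi 0 = Ioo 0 1 := by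
  rw [← image_image exp (fun t => -t), image_neg_Ioi, neg_zero, image_exp_Iio, exp_zero]

lemma injOn_exp_neg : InjOn (fun t : ℝ => exp (-t)) (Ioi 0) :=
  fun _ _ _ _ h => neg_injective (exp_injective h)

lemma hasDerivAt_exp_neg (t : ℝ) : HasDerivAt (fun t : ℝ => exp (-t)) (-exp (-t)) t := by
  simpa using (hasDerivAt_neg t).exp

lemma integrableOn_Ioo_comp_neg_log_iff (g : ℝ → ℝ) :
    IntegrableOn (fun x => g (-log x)) (Ioo 0 1) ↔
      IntegrableOn (fun t => exp (-t) * g t) (Ioi 0) := by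
  rw [← image_exp_neg_Ioi_zero, integrableOn_image_iff_integrableOn_abs_deriv_smul
    measurableSet_Ioi (fun t _ => (hasDerivAt_exp_neg t).hasDerivWithinAt) injOn_exp_neg]
  simp [abs_of_pos (exp_pos _)]

lemma integral_Ioo_comp_neg_log (g : ℝ → ℝ) :
    ∫ x in Ioo 0 1, g (-log x) = ∫ t in Ioi 0, exp (-t) * g t := by
  rw [← image_exp_neg_Ioi_zero, integral_image_eq_integral_abs_deriv_smul
    measurableSet_Ioi (fun t _ => (hasDerivAt_exp_neg t).hasDerivWithinAt) injOn_exp_neg]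
  simp [abs_of_pos (exp_pos _)]

lemma integrableOn_Ioi_exp_neg_mul_pow (k : ℕ) :
    IntegrableOn (fun t : ℝ => exp (-t) * t ^ k) (Ioi 0) := by
  simpa using GammaIntegral_convergent (s := (k : ℝ) + 1) (by positivity)

lemma integral_Ioi_exp_neg_mul_pow (k : ℕ) :
    ∫ t in Ioi 0, exp (-t) * t ^ k = k ! := by
  simpa using (Gamma_eq_integral (s := (k : ℝ) + 1) (by positivity)).symm.trans
    (Gamma_nat_eq_factorial k)

lemma integrableOn_Ioo_neg_log_pow (k : ℕ) : IntegrableOn (fun x => (-log x) ^ k) (Ioo 0 1) :=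
  (integrableOn_Ioo_comp_neg_log_iff (· ^ k)).2 (integrableOn_Ioi_exp_neg_mul_pow k)

lemma integral_Ioo_neg_log_pow (k : ℕ) : ∫ x in Ioo 0 1, (-log x) ^ k = k ! :=
  (integral_Ioo_comp_neg_log (· ^ k)).trans (integral_Ioi_exp_neg_mul_pow k)

local notation "𝕌" => Measure.restrict (volume : Measure ℝ) (Icc (0 : ℝ) 1)

instance : IsProbabilityMeasure 𝕌 := ⟨by simp⟩

lemma uniform_eq_restrict_Ioo : 𝕌 = volume.restrict (Ioo 0 1) :=
  Measure.restrict_congr_set Ioo_ae_eq_Icc.symm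

lemma integrable_neg_log_pow_uniform (k : ℕ) : Integrable (fun x => (-log x) ^ k) 𝕌 := by
  rw [uniform_eq_restrict_Ioo]; exact integrableOn_Ioo_neg_log_pow k

lemma integral_neg_log_pow_uniform (k : ℕ) : ∫ x, (-log x) ^ k ∂𝕌 = k ! := by
  rw [uniform_eq_restrict_Ioo]; exact integral_Ioo_neg_log_pow k

lemma memLp_neg_log_uniform : MemLp (fun x => -log x) 2 𝕌 :=
  (memLp_two_iff_integrable_sq (by fun_prop)).2 (integrable_neg_log_pow_uniform 2)

lemma integral_neg_log_uniform : ∫ x, -log x ∂𝕌 = 1 := by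
  simpa using integral_neg_log_pow_uniform 1

lemma variance_neg_log_uniform : Var[fun x => -log x; 𝕌] = 1 := by
  have h2 : ∫ x, (-log x) ^ 2 ∂𝕌 = 2 := by simpa using integral_neg_log_pow_uniform 2
  rw [variance_eq_sub memLp_neg_log_uniform]
  simp only [Pi.pow_apply, h2, integral_neg_log_uniform]
  norm_num

section NegLogSum

variable {ι : Type*} [Fintype ι]

noncomputable def negLogSum (ξ : ι → ℝ) : ℝ := ∑ i, -log (ξ i)

lemma prod_eq_exp_neg_negLogSum {ξ : ι → ℝ} (hξ : ∀ i, 0 < ξ i) :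
    ∏ i, ξ i = exp (-negLogSum ξ) := by
  simp only [negLogSum, Finset.sum_neg_distrib, neg_neg, exp_sum, fun i => exp_log (hξ i)]

lemma negLogSum_eq_sum_fun : (negLogSum : (ι → ℝ) → ℝ) = ∑ i, fun ξ => -log (ξ i) := by
  ext ξ; simp [negLogSum]

lemma memLp_negLogSum : MemLp (negLogSum : (ι → ℝ) → ℝ) 2 (Measure.pi fun _ => 𝕌) := by
  rw [negLogSum_eq_sum_fun]
  exact memLp_finsetSum' _ fun i _ =>
    memLp_neg_log_uniform.comp_measurePreserving (measurePreserving_eval _ i)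

lemma integral_negLogSum : ∫ ξ, negLogSum ξ ∂(Measure.pi fun _ : ι => 𝕌) = Fintype.card ι := by
  have h1 (i : ι) : ∫ ξ, -log (ξ i) ∂(Measure.pi fun _ : ι => 𝕌) = 1 :=
    (integral_comp_eval (μ := fun _ : ι => 𝕌) (i := i) (f := fun x => -log x)
      (by fun_prop)).trans integral_neg_log_uniform
  simp only [negLogSum]
  rw [integral_finsetSum (f := fun (i : ι) (ξ : ι → ℝ) => -log (ξ i)) _ fun i _ =>
    integrable_comp_eval (μ := fun _ : ι => 𝕌) (i := i) (f := fun x => -log x)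
      (memLp_neg_log_uniform.integrable one_le_two)]
  simp [h1]

lemma variance_negLogSum : Var[negLogSum; Measure.pi fun _ : ι => 𝕌] = Fintype.card ι := by
  rw [negLogSum_eq_sum_fun, variance_sum_pi fun _ => memLp_neg_log_uniform]
  simp [variance_neg_log_uniform]

lemma ae_forall_pos_uniform_pi : ∀ᵐ ξ ∂(Measure.pi fun _ : ι => 𝕌), ∀ i, 0 < ξ i := by
  have : ∀ᵐ x ∂𝕌, 0 < x := by
    rw [uniform_eq_restrict_Ioo]
    exact (ae_restrict_mem measurableSet_Ioo).mono fun x hx => hx.1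
  exact Filter.eventually_all.2 fun i => Measure.tendsto_eval_ae_ae.eventually this

lemma measure_prod_le_exp_neg_sub_le {t : ℝ} (ht : 0 < t) :
    (Measure.pi fun _ : ι => 𝕌) {ξ | ∏ i, ξ i ≤ exp (-(Fintype.card ι : ℝ) - t)}
      ≤ ENNReal.ofReal (Fintype.card ι / t ^ 2) := by
  calc (Measure.pi fun _ : ι => 𝕌) {ξ | ∏ i, ξ i ≤ exp (-(Fintype.card ι : ℝ) - t)}
      ≤ (Measure.pi fun _ : ι => 𝕌)
          {ξ | t ≤ |negLogSum ξ - ∫ ξ, negLogSum ξ ∂(Measure.pi fun _ : ι => 𝕌)|} := by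
        refine measure_mono_ae (ae_forall_pos_uniform_pi.mono fun ξ hpos hξ => ?_)
        change ∏ i, ξ i ≤ _ at hξ
        rw [prod_eq_exp_neg_negLogSum hpos, exp_le_exp] at hξ
        change t ≤ _
        rw [integral_negLogSum]
        exact le_abs.2 (Or.inl (by linarith))
    _ ≤ ENNReal.ofReal (Fintype.card ι / t ^ 2) := by
        simpa only [variance_negLogSum] using meas_ge_le_variance_div_sq memLp_negLogSum ht

end NegLogSum

lemma integral_le_add_mul_of_le_on_compl {Ω : Type*} [MeasurableSpace Ω] {μ : Measure Ω}
    [IsProbabilityMeasure μ] {f : Ω → ℝ} {s : Set Ω} {c q : ℝ} (hs : MeasurableSet s)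
    (hf : Integrable f μ) (hf_le_one : ∀ᵐ ω ∂μ, f ω ≤ 1) (hf_le : ∀ ω ∈ sᶜ, f ω ≤ c)
    (hc : c ≤ 1) (hq : μ.real s ≤ q) :
    ∫ ω, f ω ∂μ ≤ q + (1 - q) * c := by
  have h_on : ∫ ω in s, f ω ∂μ ≤ μ.real s := by
    simpa using setIntegral_mono_ae_restrict hf.integrableOn (integrableOn_const (C := (1 : ℝ)))
      (ae_restrict_of_ae hf_le_one)
  have h_off : ∫ ω in sᶜ, f ω ∂μ ≤ (1 - μ.real s) * c := by
    rw [← probReal_compl_eq_one_sub hs, ← smul_eq_mul, ← setIntegral_const]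
    exact setIntegral_mono_on hf.integrableOn integrableOn_const hs.compl hf_le
  rw [← integral_add_compl hs hf]
  nlinarith

lemma integral_exp_neg_mul_prod_le {ι : Type*} [Fintype ι] {n a q : ℝ} (hn : 0 ≤ n) (ha : 0 ≤ a)
    (hq : (Measure.pi fun _ : ι => 𝕌).real {ξ | ∏ i, ξ i ≤ a} ≤ q) :
    ∫ ξ, exp (-n * ∏ i, ξ i) ∂(Measure.pi fun _ : ι => 𝕌) ≤ q + (1 - q) * exp (-n * a) := by
  have h_le_one : ∀ᵐ ξ ∂(Measure.pi fun _ : ι => 𝕌), exp (-n * ∏ i, ξ i) ≤ 1 :=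
    ae_forall_pos_uniform_pi.mono fun ξ hpos => exp_le_one_iff.2 <|
      mul_nonpos_of_nonpos_of_nonneg (neg_nonpos.2 hn) (Finset.prod_nonneg fun i _ => (hpos i).le)
  refine integral_le_add_mul_of_le_on_compl (measurableSet_le (by fun_prop) measurable_const)
    (Integrable.of_bound (by fun_prop) 1 ?_) h_le_one (fun ξ hξ => ?_)
    (exp_le_one_iff.2 (by nlinarith)) hq
  · filter_upwards [h_le_one] with ξ hξ
    rwa [Real.norm_of_nonneg (exp_pos _).le]
  · have : a < ∏ i, ξ i := not_le.1 hξ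
    exact exp_le_exp.2 (by nlinarith)

lemma exp_neg_mul_exp_neg_le {n x : ℝ} (h : exp x ≤ n) : exp (-n * exp (-x)) ≤ (exp 1)⁻¹ := by
  have : 1 ≤ n * exp (-x) :=
    calc 1 = exp x * exp (-x) := by rw [← exp_add, add_neg_cancel, exp_zero]
      _ ≤ n * exp (-x) := by gcongr
  rw [← exp_neg, exp_le_exp]
  linarith

lemma one_add_four_div_exp_one_div_five_lt_half : (1 + 4 * (exp 1)⁻¹) / 5 < 1 / 2 := by
  have : (exp 1)⁻¹ < 3 / 8 := by
    rw [inv_lt_comm₀ (exp_pos 1) (by norm_num)]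
    linarith [exp_one_gt_d9]
  linarith

/-- **Control of the volume of a BPRF leaf.**
Let `V_p = Z₁ ⋯ Z_p` be the product of `p` i.i.d. uniform random variables on `[0,1]`
(realized on the canonical product space `Fin p → ℝ` with the product of uniform measures).
Then (i) `P(V_p ≤ exp(−p − √(up))) ≤ 1/u` for every `u > 0`;
(ii) `E[exp(−n V_p)] ≤ 1/u + (1 − 1/u) exp(−n exp(−(p + √(up))))` for every `n ≥ 1`, `u > 0`;
(iii) if `n ≥ exp(p + √(5p))` then `E[exp(−n V_p)] ≤ (1 + 4e⁻¹)/5 < 1/2`. -/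
theorem bprf_leaf_volume_control
    (p : ℕ) (hp : 1 ≤ p) :
    (∀ u : ℝ, 0 < u →
        (Measure.pi fun _ : Fin p => (volume : Measure ℝ).restrict (Set.Icc 0 1))
            {ξ : Fin p → ℝ | (∏ i : Fin p, ξ i) ≤ Real.exp (-(p : ℝ) - Real.sqrt (u * p))}
          ≤ ENNReal.ofReal (1 / u))
    ∧ (∀ n : ℕ, 1 ≤ n → ∀ u : ℝ, 0 < u →
        (∫ ξ : Fin p → ℝ, Real.exp (-(n : ℝ) * ∏ i : Fin p, ξ i)
            ∂(Measure.pi fun _ : Fin p => (volume : Measure ℝ).restrict (Set.Icc 0 1)))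
          ≤ 1 / u + (1 - 1 / u) * Real.exp (-(n : ℝ) * Real.exp (-((p : ℝ) + Real.sqrt (u * p)))))
    ∧ (∀ n : ℕ, 1 ≤ n → Real.exp ((p : ℝ) + Real.sqrt (5 * p)) ≤ (n : ℝ) →
        (∫ ξ : Fin p → ℝ, Real.exp (-(n : ℝ) * ∏ i : Fin p, ξ i)
            ∂(Measure.pi fun _ : Fin p => (volume : Measure ℝ).restrict (Set.Icc 0 1)))
          ≤ (1 + 4 * (Real.exp 1)⁻¹) / 5)
    ∧ (1 + 4 * (Real.exp 1)⁻¹) / 5 < 1 / 2 := by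
  have hp_pos : (0 : ℝ) < p := by exact_mod_cast hp
  have tail (u : ℝ) (hu : 0 < u) : (Measure.pi fun _ : Fin p => 𝕌)
      {ξ | ∏ i, ξ i ≤ exp (-(p : ℝ) - √(u * p))} ≤ ENNReal.ofReal (1 / u) := by
    have h := measure_prod_le_exp_neg_sub_le (ι := Fin p) (t := √(u * p)) (by positivity)
    rwa [Fintype.card_fin, sq_sqrt (by positivity), div_mul_cancel_right₀ hp_pos.ne',
      ← one_div] at h
  have mean (n : ℕ) (u : ℝ) (hu : 0 < u) : ∫ ξ, exp (-(n : ℝ) * ∏ i, ξ i)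
      ∂(Measure.pi fun _ : Fin p => 𝕌)
        ≤ 1 / u + (1 - 1 / u) * exp (-(n : ℝ) * exp (-((p : ℝ) + √(u * p)))) :=
    integral_exp_neg_mul_prod_le n.cast_nonneg (exp_pos (-((p : ℝ) + √(u * p)))).le <| by
      rw [neg_add']
      exact ENNReal.toReal_le_of_le_ofReal (by positivity) (tail u hu)
  refine ⟨tail, fun n _ u hu => mean n u hu, fun n _ hn => ?_,
    one_add_four_div_exp_one_div_five_lt_half⟩
  calc _ ≤ 1 / 5 + (1 - 1 / 5) * exp (-(n : ℝ) * exp (-((p : ℝ) + √(5 * p)))) :=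
        mean n 5 (by norm_num)
    _ ≤ 1 / 5 + (1 - 1 / 5) * (exp 1)⁻¹ := by gcongr; exact exp_neg_mul_exp_neg_le hn
    _ = (1 + 4 * (exp 1)⁻¹) / 5 := by ring
end
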